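/- arXiv:1205.1106 — 2 statements merged into one kernel-verified Lean document; each statement's English description precedes it below -/
import Mathlib

section
/- Let 𝐁 be a finite unary algebra, let (x,y) ∈ B×B, and let β = Cg^𝐁(x,y) be the principal congruence generated by (x,y), with m congruence classes. Let 𝐀 be the overalgebra of the first type built from 𝐁 with tie-point sequence T : x, y (K=2) and the trivial partition of the index set (N=1). Then: (1) the interval [β*, β̂] in Con 𝐀 is isomorphic to 𝟐^{m−1}, the (m−1)-st power of the two-element lattice; (2) for every θ ∈ Con 𝐁 with θ ≱ β, θ* = θ̂; and (3) for every θ ∈ Con 𝐁 with θ ≥ β having r congruence classes, [θ*, θ̂] ≅ 𝟐^{r−1}. -/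
namespace Overalg

variable {A : Type*}

/-- `θ` is an equivalence relation on the whole type `A`, viewed as a set of pairs. -/
def IsEquivRel (θ : Set (A × A)) : Prop :=
  (∀ x : A, (x, x) ∈ θ) ∧ (∀ x y : A, (x, y) ∈ θ → (y, x) ∈ θ) ∧
    (∀ x y z : A, (x, y) ∈ θ → (y, z) ∈ θ → (x, z) ∈ θ)

/-- `θ` is an equivalence relation on the subset `B` of `A`, viewed as a set of pairs. -/
def IsEquivOn (B : Set A) (θ : Set (A × A)) : Prop :=
  θ ⊆ B ×ˢ B ∧ (∀ x ∈ B, (x, x) ∈ θ) ∧ (∀ x y : A, (x, y) ∈ θ → (y, x) ∈ θ) ∧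
    (∀ x y z : A, (x, y) ∈ θ → (y, z) ∈ θ → (x, z) ∈ θ)

/-- The clone of unary polynomials of the unary algebra `⟨A, F⟩`: the smallest set of
maps `A → A` containing `F`, the identity and all constants, closed under composition. -/
inductive Pol1 (F : Set (A → A)) : (A → A) → Prop
  | base : ∀ f ∈ F, Pol1 F f
  | id : Pol1 F _root_.id
  | const : ∀ a : A, Pol1 F (fun _ => a)
  | comp : ∀ f g : A → A, Pol1 F f → Pol1 F g → Pol1 F (f ∘ g)

/-- A congruence of the unary algebra `⟨A, F⟩`. -/
def IsCon (F : Set (A → A)) (θ : Set (A × A)) : Prop :=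
  IsEquivRel θ ∧ ∀ f ∈ F, ∀ p ∈ θ, (f p.1, f p.2) ∈ θ

end Overalg

namespace Overalg

/-- The data of an *overalgebra of the first type* built over a finite base algebra
`𝐁 = ⟨B 0, F⟩` from a tie-point sequence `t 1, …, t K` and a partition
`T 1 | ⋯ | T N` of the index set `{1, …, K}`.  The universe is `A = B 0 ∪ ⋯ ∪ B K`,
where `B i ∩ B 0 = {t i}`, `π i : B 0 → B i` is a bijection fixing `t i`,
`e0` maps each `π i b` back to `b`, and `s n` collapses each `B i` with `i ∈ T n`
to its tie-point `t i` and is the identity elsewhere. -/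
structure OvI (A : Type*) where
  K : ℕ
  N : ℕ
  B : ℕ → Set A
  F : Set (A → A)
  t : ℕ → A
  π : ℕ → A → A
  T : ℕ → Set ℕ
  e0 : A → A
  s : ℕ → A → A
  hfin : Finite A
  /-- `A = B 0 ∪ B 1 ∪ ⋯ ∪ B K` -/
  hA : ∀ x : A, ∃ i ≤ K, x ∈ B i
  /-- the base operations map `B 0` into itself -/
  hF : ∀ f ∈ F, Set.MapsTo f (B 0) (B 0)
  /-- each tie-point `t i` lies in `B 0`, and `B i ∩ B 0 = {t i}` -/
  ht : ∀ i, 1 ≤ i → i ≤ K → t i ∈ B 0 ∧ B i ∩ B 0 = {t i}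
  /-- for `i ≠ j`: `B i ∩ B j = {t i}` if `t i = t j`, and `B i ∩ B j = ∅` otherwise -/
  hdisj : ∀ i j, 1 ≤ i → i ≤ K → 1 ≤ j → j ≤ K → i ≠ j →
    (t i = t j → B i ∩ B j = {t i}) ∧ (t i ≠ t j → B i ∩ B j = ∅)
  /-- `π 0` is the identity -/
  hπ0 : ∀ x : A, π 0 x = x
  /-- `π i` is a bijection of `B 0` onto `B i` -/
  hπbij : ∀ i, 1 ≤ i → i ≤ K → Set.BijOn (π i) (B 0) (B i)
  /-- `π i` fixes the tie-point `t i` -/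
  hπt : ∀ i, 1 ≤ i → i ≤ K → π i (t i) = t i
  /-- each block `T n` consists of indices in `{1, …, K}` -/
  hT1 : ∀ n, 1 ≤ n → n ≤ N → T n ⊆ Set.Icc 1 K
  /-- the blocks `T 1, …, T N` partition `{1, …, K}` -/
  hT2 : ∀ i, 1 ≤ i → i ≤ K → ∃! n, 1 ≤ n ∧ n ≤ N ∧ i ∈ T n
  /-- `e0 (π i b) = b` for `b ∈ B 0`; this says `e0 x = π_{ιx}⁻¹ x` -/
  he0 : ∀ i ≤ K, ∀ b ∈ B 0, e0 (π i b) = b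
  /-- `s n` collapses `B i` to `t i` for `i ∈ T n` … -/
  hs1 : ∀ n, 1 ≤ n → n ≤ N → ∀ i ∈ T n, ∀ x ∈ B i, s n x = t i
  /-- … and is the identity elsewhere -/
  hs2 : ∀ n, 1 ≤ n → n ≤ N → ∀ x : A, (∀ i ∈ T n, x ∉ B i) → s n x = x

namespace OvI

variable {A : Type*} (O : OvI A)

/-- `e k = π k ∘ e0`: the idempotent map of `A` onto `B k`. -/
def e (k : ℕ) : A → A := fun x => O.π k (O.e0 x)

/-- The operations of the overalgebra:
`F_A = {f ∘ e0 : f ∈ F} ∪ {e k : 0 ≤ k ≤ K} ∪ {s n : 1 ≤ n ≤ N}`. -/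
def FA : Set (A → A) :=
  {g | ∃ f ∈ O.F, g = f ∘ O.e0} ∪ {g | ∃ k ≤ O.K, g = O.e k} ∪
    {g | ∃ n, 1 ≤ n ∧ n ≤ O.N ∧ g = O.s n}

/-- A congruence of the base algebra `𝐁 = ⟨B 0, F⟩`. -/
def ConB (β : Set (A × A)) : Prop :=
  IsEquivOn (O.B 0) β ∧ ∀ f ∈ O.F, ∀ p ∈ β, (f p.1, f p.2) ∈ β

/-- The `β`-class of `c`. -/
def cls (_O : OvI A) (β : Set (A × A)) (c : A) : Set A := {x | (c, x) ∈ β}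

/-- `β^k = {(π k x, π k y) : (x, y) ∈ β}`, the copy of `β` on `B k`. -/
def bk (β : Set (A × A)) (k : ℕ) : Set (A × A) :=
  {p | ∃ q ∈ β, p = (O.π k q.1, O.π k q.2)}

/-- For `c ∈ B 0` with class `C = c/β`, this is `C ∪ ⋃_{i ∈ ℐ} π i '' C`, where
`ℐ = {i : t i ∈ C}` — a block of `β⋆` meeting `B 0`. -/
def blk (β : Set (A × A)) (c : A) : Set A :=
  O.cls β c ∪ ⋃ i ∈ {i | 1 ≤ i ∧ i ≤ O.K ∧ (c, O.t i) ∈ β}, O.π i '' O.cls β c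

/-- `β⋆ = ⋃_{k=0}^{K} β^k ∪ ⋃_{r=1}^{m} (C_r ∪ ⋃_{i∈ℐ_r} C_r^i)²`. -/
def bstar (β : Set (A × A)) : Set (A × A) :=
  {p | ∃ k ≤ O.K, p ∈ O.bk β k} ∪
    {p | ∃ c ∈ O.B 0, p.1 ∈ O.blk β c ∧ p.2 ∈ O.blk β c}

/-- For `c, d ∈ B 0` in distinct `β`-classes `C_r = c/β`, `C_ℓ = d/β`, this is
`⋃_{i ∈ T n ∩ ℐ_r} C_ℓ^i`. -/
def wing (β : Set (A × A)) (n : ℕ) (c d : A) : Set A :=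
  ⋃ i ∈ {i | i ∈ O.T n ∧ (c, O.t i) ∈ β}, O.π i '' O.cls β d

/-- `β̃ = β⋆ ∪ ⋃_{n=1}^{N} ⋃_{r=1}^m ⋃_{ℓ≠r} (⋃_{i ∈ 𝒯_n ∩ ℐ_r} C_ℓ^i)²`. -/
def btilde (β : Set (A × A)) : Set (A × A) :=
  O.bstar β ∪
    {p | ∃ n, 1 ≤ n ∧ n ≤ O.N ∧ ∃ c ∈ O.B 0, ∃ d ∈ O.B 0, (c, d) ∉ β ∧
      p.1 ∈ O.wing β n c d ∧ p.2 ∈ O.wing β n c d}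

end OvI

end Overalg
namespace Overalg

namespace OvI

variable {A : Type*} (O : OvI A)

/-- `u` lies in the `j`-th copy, with base point `e0 u`. -/
def Cp (u : A) (j : ℕ) : Prop :=
  j ≤ O.K ∧ O.e0 u ∈ O.B 0 ∧ u = O.π j (O.e0 u)

/-- The base class of `u` is tied to copy `j`. -/
def Tie (θ : Set (A × A)) (j : ℕ) (u : A) : Prop :=
  j = 0 ∨ (O.t j, O.e0 u) ∈ θ

/-- The least congruence of the overalgebra containing `θ`. -/
def star' (θ : Set (A × A)) : Set (A × A) :=
  {p | (O.e0 p.1, O.e0 p.2) ∈ θ ∧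
    ∃ j k, O.Cp p.1 j ∧ O.Cp p.2 k ∧ (j = k ∨ (O.Tie θ j p.1 ∧ O.Tie θ k p.2))}

/-- A congruence between `θ⋆` and `θ̂`, gluing the two wings over `W`. -/
def mid (θ : Set (A × A)) (x y : A) (W : Set A) : Set (A × A) :=
  O.star' θ ∪
    {p | (x, y) ∈ θ ∧ (O.e0 p.1, O.e0 p.2) ∈ θ ∧ O.e0 p.1 ∈ W ∧
      ((O.Cp p.1 1 ∧ O.Cp p.2 2) ∨ (O.Cp p.1 2 ∧ O.Cp p.2 1))}

variable {O}

section Basic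

lemma cp_pi {j : ℕ} {b : A} (hj : j ≤ O.K) (hb : b ∈ O.B 0) :
    O.Cp (O.π j b) j ∧ O.e0 (O.π j b) = b := by
  have h : O.e0 (O.π j b) = b := O.he0 j hj b hb
  exact ⟨⟨hj, by rw [h]; exact hb, by rw [h]⟩, h⟩

lemma cp_exists (u : A) : ∃ j, O.Cp u j := by
  obtain ⟨i, hiK, hmem⟩ := O.hA u
  rcases Nat.eq_zero_or_pos i with h0 | h1
  · subst h0
    have h := (cp_pi (Nat.zero_le O.K) hmem).1
    rw [O.hπ0 u] at h
    exact ⟨0, h⟩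
  · obtain ⟨b, hb, rfl⟩ := (O.hπbij i h1 hiK).surjOn hmem
    exact ⟨i, (cp_pi hiK hb).1⟩

lemma e0_mem (u : A) : O.e0 u ∈ O.B 0 := by
  obtain ⟨j, h⟩ := cp_exists u; exact h.2.1

lemma e0_id {u : A} (hu : u ∈ O.B 0) : O.e0 u = u := by
  have h := O.he0 0 (Nat.zero_le _) u hu
  rwa [O.hπ0] at h

lemma cp_zero {u : A} (hu : u ∈ O.B 0) : O.Cp u 0 :=
  ⟨Nat.zero_le _, by rw [e0_id hu]; exact hu, by rw [O.hπ0, e0_id hu]⟩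

lemma cp_mem {u : A} {j : ℕ} (h : O.Cp u j) : u ∈ O.B j := by
  rcases Nat.eq_zero_or_pos j with h0 | h1
  · subst h0
    rw [h.2.2, O.hπ0]; exact h.2.1
  · rw [h.2.2]; exact (O.hπbij j h1 h.1).mapsTo h.2.1

lemma tmem {j : ℕ} (hj1 : 1 ≤ j) (hjK : j ≤ O.K) : O.t j ∈ O.B 0 :=
  (O.ht j hj1 hjK).1

lemma cp_ne {u : A} {j k : ℕ} (h1 : O.Cp u j) (h2 : O.Cp u k) (hne : j ≠ k)
    (hj1 : 1 ≤ j) : O.e0 u = O.t j := by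
  have hmj := cp_mem h1; have hmk := cp_mem h2
  rcases Nat.eq_zero_or_pos k with h0 | hk1
  · subst h0
    have hm : u ∈ O.B j ∩ O.B 0 := ⟨hmj, hmk⟩
    rw [(O.ht j hj1 h1.1).2] at hm
    have hu : u = O.t j := hm
    rw [e0_id hmk, hu]
  · by_cases htt : O.t j = O.t k
    · have hm : u ∈ O.B j ∩ O.B k := ⟨hmj, hmk⟩
      rw [(O.hdisj j k hj1 h1.1 hk1 h2.1 hne).1 htt] at hm
      have hu : u = O.t j := hm
      rw [hu, e0_id (tmem hj1 h1.1)]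
    · have hm : u ∈ O.B j ∩ O.B k := ⟨hmj, hmk⟩
      rw [(O.hdisj j k hj1 h1.1 hk1 h2.1 hne).2 htt] at hm
      exact absurd hm (Set.notMem_empty u)

end Basic

section Theta

variable {θ : Set (A × A)} {x y : A}

lemma cp_tie (hθ : O.ConB θ) {u : A} {j k : ℕ} (h1 : O.Cp u j) (h2 : O.Cp u k)
    (hne : j ≠ k) : O.Tie θ j u := by
  rcases Nat.eq_zero_or_pos j with h0 | hj1
  · exact Or.inl h0
  · right
    rw [cp_ne h1 h2 hne hj1]
    exact hθ.1.2.1 _ (tmem hj1 h1.1)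

lemma tie_transfer (hθ : O.ConB θ) {u v : A} {j : ℕ} (h : O.Tie θ j v)
    (huv : (O.e0 u, O.e0 v) ∈ θ) : O.Tie θ j u := by
  rcases h with h0 | h
  · exact Or.inl h0
  · exact Or.inr (hθ.1.2.2.2 _ _ _ h (hθ.1.2.2.1 _ _ huv))

lemma star'_refl (hθ : O.ConB θ) (u : A) : (u, u) ∈ O.star' θ := by
  obtain ⟨j, hj⟩ := cp_exists u
  exact ⟨hθ.1.2.1 _ (e0_mem u), j, j, hj, hj, Or.inl rfl⟩

lemma star'_symm (hθ : O.ConB θ) {u v : A} (h : (u, v) ∈ O.star' θ) :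
    (v, u) ∈ O.star' θ := by
  obtain ⟨he, j, k, hj, hk, hd⟩ := h
  exact ⟨hθ.1.2.2.1 _ _ he, k, j, hk, hj, hd.imp Eq.symm And.symm⟩

lemma subset_star' (hθ : O.ConB θ) : θ ⊆ O.star' θ := by
  rintro ⟨a, b⟩ hab
  have h1 : a ∈ O.B 0 := (hθ.1.1 hab).1
  have h2 : b ∈ O.B 0 := (hθ.1.1 hab).2
  exact ⟨by rw [e0_id h1, e0_id h2]; exact hab, 0, 0, cp_zero h1, cp_zero h2,
    Or.inl rfl⟩

lemma star'_trans (hθ : O.ConB θ) {u v w : A} (h1 : (u, v) ∈ O.star' θ)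
    (h2 : (v, w) ∈ O.star' θ) : (u, w) ∈ O.star' θ := by
  obtain ⟨he1, j, k, hj, hk, hd1⟩ := h1
  obtain ⟨he2, k', l, hk', hl, hd2⟩ := h2
  have htr := hθ.1.2.2.2
  have hsy := hθ.1.2.2.1
  refine ⟨htr _ _ _ he1 he2, j, l, hj, hl, ?_⟩
  by_cases hkk : k = k'
  · subst hkk
    rcases hd1 with rfl | ⟨t1, t2⟩
    · rcases hd2 with rfl | ⟨t3, t4⟩
      · exact Or.inl rfl
      · exact Or.inr ⟨tie_transfer hθ t3 he1, t4⟩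
    · rcases hd2 with rfl | ⟨t3, t4⟩
      · exact Or.inr ⟨t1, tie_transfer hθ t2 (hsy _ _ he2)⟩
      · exact Or.inr ⟨t1, t4⟩
  · have tkv : O.Tie θ k v := cp_tie hθ hk hk' hkk
    have tk'v : O.Tie θ k' v := cp_tie hθ hk' hk (Ne.symm hkk)
    right
    constructor
    · rcases hd1 with rfl | ⟨t1, _⟩
      · exact tie_transfer hθ tkv he1
      · exact t1
    · rcases hd2 with rfl | ⟨_, t4⟩
      · exact tie_transfer hθ tk'v (hsy _ _ he2)
      · exact t4

end Theta

end OvI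

end Overalg
namespace Overalg

namespace OvI

variable {A : Type*} {O : OvI A} {θ : Set (A × A)} {x y : A} {W : Set A}

section SVal

variable (hK : O.K = 2) (hN : O.N = 1) (hT : O.T 1 = {1, 2})
include hK hN hT

lemma s_b0 {u : A} (hu : u ∈ O.B 0) : O.s 1 u = u := by
  by_cases h : ∃ i ∈ O.T 1, u ∈ O.B i
  · obtain ⟨i, hiT, hiB⟩ := h
    have hi12 : i = 1 ∨ i = 2 := by
      rw [hT] at hiT
      simpa using hiT
    have hi1 : 1 ≤ i := by omega
    have hiK : i ≤ O.K := by omega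
    have hs := O.hs1 1 le_rfl (by omega) i hiT u hiB
    have hu2 : u ∈ O.B i ∩ O.B 0 := ⟨hiB, hu⟩
    rw [(O.ht i hi1 hiK).2] at hu2
    have : u = O.t i := hu2
    rw [hs, ← this]
  · push_neg at h
    exact O.hs2 1 le_rfl (by omega) u h

lemma s_copy {u : A} {j : ℕ} (h : O.Cp u j) (hj : 1 ≤ j) : O.s 1 u = O.t j := by
  have hjT : j ∈ O.T 1 := by
    rw [hT]
    have : j ≤ 2 := hK ▸ h.1
    interval_cases j
    · exact Set.mem_insert _ _
    · exact Set.mem_insert_of_mem _ rfl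
  exact O.hs1 1 le_rfl (by omega) j hjT u (cp_mem h)

lemma s_val {u : A} {j : ℕ} (h : O.Cp u j) :
    (j = 0 ∧ O.s 1 u = O.e0 u ∧ u = O.e0 u) ∨ (1 ≤ j ∧ O.s 1 u = O.t j) := by
  rcases Nat.eq_zero_or_pos j with h0 | h1
  · subst h0
    have hu : u ∈ O.B 0 := cp_mem h
    have he : u = O.e0 u := by rw [e0_id hu]
    exact Or.inl ⟨rfl, by rw [← he]; exact s_b0 hK hN hT hu, he⟩
  · exact Or.inr ⟨h1, s_copy hK hN hT h h1⟩

end SVal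

/-- the glue part of `mid`. -/
def Glue (O : OvI A) (θ : Set (A × A)) (x y : A) (W : Set A) : Set (A × A) :=
  {p | (x, y) ∈ θ ∧ (O.e0 p.1, O.e0 p.2) ∈ θ ∧ O.e0 p.1 ∈ W ∧
      ((O.Cp p.1 1 ∧ O.Cp p.2 2) ∨ (O.Cp p.1 2 ∧ O.Cp p.2 1))}

lemma mid_eq : O.mid θ x y W = O.star' θ ∪ Glue O θ x y W := rfl

section Mid

variable (hθ : O.ConB θ) (hK : O.K = 2)
  (ht1 : O.t 1 = x) (ht2 : O.t 2 = y)

include hθ ht1 ht2 in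
lemma tie_to_x (hxy : (x, y) ∈ θ) {v : A} {cv : ℕ} (hcv1 : 1 ≤ cv) (hcv2 : cv ≤ 2)
    (h : O.Tie θ cv v) : (x, O.e0 v) ∈ θ := by
  rcases h with h0 | hmem
  · omega
  · interval_cases cv
    · rw [ht1] at hmem; exact hmem
    · rw [ht2] at hmem; exact hθ.1.2.2.2 _ _ _ hxy hmem

include hθ hK ht1 ht2 in
lemma cp_force (hxy : (x, y) ∈ θ) {v : A} {cv : ℕ} (hTv : (x, O.e0 v) ∉ θ)
    (hv : O.Cp v cv) (hcv : 1 ≤ cv) : ∀ k, O.Cp v k → k = cv := by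
  intro k hk
  by_contra hne
  exact hTv (tie_to_x hθ ht1 ht2 hxy hcv (hK ▸ hv.1)
    (cp_tie hθ hv hk (fun h => hne h.symm)))

include hθ ht1 ht2 in
lemma glue_star (hg : (u, v) ∈ Glue O θ x y W)
    (hTu : (x, O.e0 u) ∈ θ) : (u, v) ∈ O.star' θ := by
  obtain ⟨hxy, he, _, hcr⟩ := hg
  have htr := hθ.1.2.2.2
  have hsy := hθ.1.2.2.1
  have tie1u : O.Tie θ 1 u := Or.inr (by rw [ht1]; exact hTu)
  have tie2u : O.Tie θ 2 u := Or.inr (by rw [ht2]; exact htr _ _ _ (hsy _ _ hxy) hTu)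
  have hTv : (x, O.e0 v) ∈ θ := htr _ _ _ hTu he
  have tie1v : O.Tie θ 1 v := Or.inr (by rw [ht1]; exact hTv)
  have tie2v : O.Tie θ 2 v := Or.inr (by rw [ht2]; exact htr _ _ _ (hsy _ _ hxy) hTv)
  rcases hcr with ⟨h1, h2⟩ | ⟨h1, h2⟩
  · exact ⟨he, 1, 2, h1, h2, Or.inr ⟨tie1u, tie2v⟩⟩
  · exact ⟨he, 2, 1, h1, h2, Or.inr ⟨tie2u, tie1v⟩⟩

variable (hWsat : ∀ a ∈ W, ∀ b, (a, b) ∈ θ → b ∈ W)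

include hθ hWsat in
lemma mid_symm {u v : A} (h : (u, v) ∈ O.mid θ x y W) : (v, u) ∈ O.mid θ x y W := by
  rcases h with h | ⟨hxy, he, hWm, hcr⟩
  · exact Or.inl (star'_symm hθ h)
  · exact Or.inr ⟨hxy, hθ.1.2.2.1 _ _ he, hWsat _ hWm _ he,
      hcr.elim (fun h => Or.inr ⟨h.2, h.1⟩) (fun h => Or.inl ⟨h.2, h.1⟩)⟩

include hθ hK ht1 ht2 hWsat in
lemma mid_trans {u v w : A} (h1 : (u, v) ∈ O.mid θ x y W)
    (h2 : (v, w) ∈ O.mid θ x y W) : (u, w) ∈ O.mid θ x y W := by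
  have htr := hθ.1.2.2.2
  have hsy := hθ.1.2.2.1
  rcases h1 with h1 | hg1
  · rcases h2 with h2 | hg2
    · exact Or.inl (star'_trans hθ h1 h2)
    · by_cases hTv : (x, O.e0 v) ∈ θ
      · exact Or.inl (star'_trans hθ h1 (glue_star hθ ht1 ht2 hg2 hTv))
      · obtain ⟨he1, j, k, hj, hk, hd1⟩ := h1
        obtain ⟨hxy, he2, hWv, hcr⟩ := hg2
        have hWu : O.e0 u ∈ W := hWsat _ hWv _ (hsy _ _ he1)
        rcases hcr with ⟨hv1, hw2⟩ | ⟨hv2, hw1⟩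
        · have hk1 : k = 1 := cp_force hθ hK ht1 ht2 hxy hTv hv1 le_rfl k hk
          subst hk1
          have hj1 : j = 1 := by
            rcases hd1 with rfl | ⟨_, htie⟩
            · rfl
            · exact absurd (tie_to_x hθ ht1 ht2 hxy le_rfl (by omega) htie) hTv
          subst hj1
          exact Or.inr ⟨hxy, htr _ _ _ he1 he2, hWu, Or.inl ⟨hj, hw2⟩⟩
        · have hk2 : k = 2 := cp_force hθ hK ht1 ht2 hxy hTv hv2 (by omega) k hk
          subst hk2
          have hj2 : j = 2 := by
            rcases hd1 with rfl | ⟨_, htie⟩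
            · rfl
            · exact absurd (tie_to_x hθ ht1 ht2 hxy (by omega) (by omega) htie) hTv
          subst hj2
          exact Or.inr ⟨hxy, htr _ _ _ he1 he2, hWu, Or.inr ⟨hj, hw1⟩⟩
  · rcases h2 with h2 | hg2
    · by_cases hTu : (x, O.e0 u) ∈ θ
      · exact Or.inl (star'_trans hθ (glue_star hθ ht1 ht2 hg1 hTu) h2)
      · obtain ⟨hxy, he1, hWu, hcr⟩ := hg1
        have hTv : (x, O.e0 v) ∉ θ := fun h => hTu (htr _ _ _ h (hsy _ _ he1))
        obtain ⟨he2, k', l, hk', hl, hd2⟩ := h2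
        rcases hcr with ⟨hu1, hv2⟩ | ⟨hu2, hv1⟩
        · have hk2 : k' = 2 := cp_force hθ hK ht1 ht2 hxy hTv hv2 (by omega) k' hk'
          subst hk2
          have hl2 : l = 2 := by
            rcases hd2 with h' | ⟨htie, _⟩
            · omega
            · exact absurd (tie_to_x hθ ht1 ht2 hxy (by omega) (by omega) htie) hTv
          subst hl2
          exact Or.inr ⟨hxy, htr _ _ _ he1 he2, hWu, Or.inl ⟨hu1, hl⟩⟩
        · have hk1 : k' = 1 := cp_force hθ hK ht1 ht2 hxy hTv hv1 le_rfl k' hk'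
          subst hk1
          have hl1 : l = 1 := by
            rcases hd2 with h' | ⟨htie, _⟩
            · omega
            · exact absurd (tie_to_x hθ ht1 ht2 hxy le_rfl (by omega) htie) hTv
          subst hl1
          exact Or.inr ⟨hxy, htr _ _ _ he1 he2, hWu, Or.inr ⟨hu2, hl⟩⟩
    · by_cases hTu : (x, O.e0 u) ∈ θ
      · have he1 := hg1.2.1
        exact Or.inl (star'_trans hθ (glue_star hθ ht1 ht2 hg1 hTu)
          (glue_star hθ ht1 ht2 hg2 (htr _ _ _ hTu he1)))
      · obtain ⟨hxy, he1, hWu, hcr1⟩ := hg1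
        obtain ⟨_, he2, hWv, hcr2⟩ := hg2
        have hTv : (x, O.e0 v) ∉ θ := fun h => hTu (htr _ _ _ h (hsy _ _ he1))
        rcases hcr1 with ⟨hu1, hv2⟩ | ⟨hu2, hv1⟩ <;>
          rcases hcr2 with ⟨hv1', hw2⟩ | ⟨hv2', hw1⟩
        · exact absurd (cp_force hθ hK ht1 ht2 hxy hTv hv2 (by omega) 1 hv1') (by omega)
        · exact Or.inl ⟨htr _ _ _ he1 he2, 1, 1, hu1, hw1, Or.inl rfl⟩
        · exact Or.inl ⟨htr _ _ _ he1 he2, 2, 2, hu2, hw2, Or.inl rfl⟩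
        · exact absurd (cp_force hθ hK ht1 ht2 hxy hTv hv1 le_rfl 2 hv2') (by omega)

end Mid

end OvI

end Overalg
namespace Overalg

set_option linter.unusedSectionVars false

namespace OvI

variable {A : Type*} {O : OvI A} {θ : Set (A × A)} {x y : A} {W : Set A}

lemma e_zero_apply (u : A) : O.e 0 u = O.e0 u := by
  show O.π 0 (O.e0 u) = O.e0 u
  exact O.hπ0 _

lemma ek_mem_FA {k : ℕ} (hk : k ≤ O.K) : O.e k ∈ O.FA :=
  Or.inl (Or.inr ⟨k, hk, rfl⟩)

lemma s_mem_FA (hN : O.N = 1) : O.s 1 ∈ O.FA :=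
  Or.inr ⟨1, le_rfl, by omega, rfl⟩

lemma mid_mem_e0 {p : A × A} (h : p ∈ O.mid θ x y W) :
    (O.e0 p.1, O.e0 p.2) ∈ θ := by
  rcases h with h | h
  · exact h.1
  · exact h.2.1

section MidCon

variable (hθ : O.ConB θ) (hK : O.K = 2) (hN : O.N = 1)
  (ht1 : O.t 1 = x) (ht2 : O.t 2 = y) (hT : O.T 1 = {1, 2})
  (hWsat : ∀ a ∈ W, ∀ b, (a, b) ∈ θ → b ∈ W)

include hθ hK hN ht1 ht2 hT hWsat in
lemma mid_iscon : IsCon O.FA (O.mid θ x y W) := by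
  have htr := hθ.1.2.2.2
  have hsy := hθ.1.2.2.1
  have hre := hθ.1.2.1
  refine ⟨⟨fun u => Or.inl (star'_refl hθ u),
    fun u v h => mid_symm hθ hWsat h,
    fun u v w h1 h2 => mid_trans hθ hK ht1 ht2 hWsat h1 h2⟩, ?_⟩
  rintro g hg p hp
  have he : (O.e0 p.1, O.e0 p.2) ∈ θ := mid_mem_e0 hp
  rcases hg with (⟨f, hf, rfl⟩ | ⟨k, hkK, rfl⟩) | ⟨n, hn1, hnN, rfl⟩
  · have hfe : (f (O.e0 p.1), f (O.e0 p.2)) ∈ θ := hθ.2 f hf (O.e0 p.1, O.e0 p.2) he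
    exact Or.inl (subset_star' hθ hfe)
  · left
    have h1 : O.e0 (O.e k p.1) = O.e0 p.1 := O.he0 k hkK _ (e0_mem p.1)
    have h2 : O.e0 (O.e k p.2) = O.e0 p.2 := O.he0 k hkK _ (e0_mem p.2)
    refine ⟨by rw [h1, h2]; exact he, k, k, ?_, ?_, Or.inl rfl⟩
    · exact ⟨hkK, by rw [h1]; exact e0_mem p.1, by rw [h1]; rfl⟩
    · exact ⟨hkK, by rw [h2]; exact e0_mem p.2, by rw [h2]; rfl⟩
  · have hn : n = 1 := by omega
    subst hn
    have key : (O.s 1 p.1, O.s 1 p.2) ∈ θ := by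
      rcases hp with ⟨_, j, k, hj, hk, hd⟩ | ⟨hxy, _, _, hcr⟩
      · have hrel : ∀ z i, O.Cp z i → O.Tie θ i z → (O.s 1 z, O.e0 z) ∈ θ := by
          intro z i hi hti
          rcases s_val hK hN hT hi with ⟨h0, hs, hz⟩ | ⟨h1', hs⟩
          · rw [hs]; exact hre _ (e0_mem z)
          · rcases hti with h0 | hmem
            · omega
            · rw [hs]; exact hmem
        rcases hd with rfl | ⟨t1, t2⟩
        · rcases s_val hK hN hT hj with ⟨h0, hs1, _⟩ | ⟨h1', hs1⟩ <;>
            rcases s_val hK hN hT hk with ⟨h0', hs2, _⟩ | ⟨h1'', hs2⟩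
          · rw [hs1, hs2]; exact he
          · omega
          · omega
          · rw [hs1, hs2]; exact hre _ (tmem h1'' hk.1)
        · have q1 := hrel _ _ hj t1
          have q2 := hrel _ _ hk t2
          exact htr _ _ _ q1 (htr _ _ _ he (hsy _ _ q2))
      · rcases hcr with ⟨hu1, hv2⟩ | ⟨hu2, hv1⟩
        · rw [s_copy hK hN hT hu1 le_rfl, s_copy hK hN hT hv2 (by omega), ht1, ht2]
          exact hxy
        · rw [s_copy hK hN hT hu2 (by omega), s_copy hK hN hT hv1 le_rfl, ht2, ht1]
          exact hsy _ _ hxy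
    exact Or.inl (subset_star' hθ key)

include hθ in
lemma mid_inter : O.mid θ x y W ∩ (O.B 0 ×ˢ O.B 0) = θ := by
  ext ⟨a, b⟩
  constructor
  · rintro ⟨hm, ha, hb⟩
    have he := mid_mem_e0 hm
    rwa [e0_id ha, e0_id hb] at he
  · intro h
    exact ⟨Or.inl (subset_star' hθ h), hθ.1.1 h⟩

include hθ in
lemma star'_least {α : Set (A × A)} (hα : IsCon O.FA α) (hsub : θ ⊆ α) :
    O.star' θ ⊆ α := by
  rintro ⟨u, v⟩ ⟨he, j, k, hj, hk, hd⟩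
  obtain ⟨⟨hre, hsy', htr'⟩, hop⟩ := hα
  have hα_e : ∀ i, i ≤ O.K → ∀ a b : A, (a, b) ∈ α →
      (O.π i (O.e0 a), O.π i (O.e0 b)) ∈ α := by
    intro i hi a b h
    exact hop (O.e i) (ek_mem_FA hi) (a, b) h
  have key : ∀ z i, O.Cp z i → O.Tie θ i z → (z, O.e0 z) ∈ α := by
    intro z i hi hti
    rcases Nat.eq_zero_or_pos i with h0 | hi1
    · subst h0
      have hz : O.e0 z = z := by
        conv_rhs => rw [hi.2.2, O.hπ0]
      rw [hz]; exact hre z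
    · rcases hti with h0 | ht
      · omega
      · have h1 : (O.t i, O.e0 z) ∈ α := hsub ht
        have h2 := hα_e i hi.1 _ _ h1
        rw [e0_id (tmem hi1 hi.1), O.hπt i hi1 hi.1, e0_id (e0_mem z), ← hi.2.2] at h2
        exact htr' _ _ _ (hsy' _ _ h2) h1
  have h0 : (O.e0 u, O.e0 v) ∈ α := hsub he
  rcases hd with rfl | ⟨t1, t2⟩
  · have h2 := hα_e j hj.1 _ _ h0
    rw [e0_id (e0_mem u), e0_id (e0_mem v), ← hj.2.2, ← hk.2.2] at h2
    exact h2
  · have k1 := key u j hj t1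
    have k2 := key v k hk t2
    exact htr' _ _ _ k1 (htr' _ _ _ h0 (hsy' _ _ k2))

include hθ hK hN ht1 ht2 hT in
lemma star'_isLeast :
    IsLeast {α : Set (A × A) | IsCon O.FA α ∧ θ ⊆ α} (O.star' θ) := by
  constructor
  · constructor
    · have hempty : O.mid θ x y ∅ = O.star' θ := by
        ext p
        simp only [mid, Set.mem_union, Set.mem_setOf_eq, Set.mem_empty_iff_false,
          false_and, and_false, or_false]
      have := mid_iscon (W := ∅) hθ hK hN ht1 ht2 hT (by simp)
      rwa [hempty] at this
    · exact subset_star' hθ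
  · exact fun α hα => star'_least hθ hα.1 hα.2

include hθ hK hN ht1 ht2 hT in
lemma con_subset_big {α : Set (A × A)} (hα : IsCon O.FA α)
    (htrace : α ∩ (O.B 0 ×ˢ O.B 0) = θ) : α ⊆ O.mid θ x y (O.B 0) := by
  have htr := hθ.1.2.2.2
  have hsy := hθ.1.2.2.1
  rintro ⟨u, v⟩ huv
  obtain ⟨j, hj⟩ := cp_exists u
  obtain ⟨k, hk⟩ := cp_exists v
  have h1 : (O.e0 u, O.e0 v) ∈ α := by
    have h := hα.2 (O.e 0) (ek_mem_FA (Nat.zero_le _)) (u, v) huv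
    rwa [e_zero_apply, e_zero_apply] at h
  have he : (O.e0 u, O.e0 v) ∈ θ := by
    rw [← htrace]; exact ⟨h1, e0_mem u, e0_mem v⟩
  have hs1 : (O.s 1 u, O.s 1 v) ∈ α := hα.2 _ (s_mem_FA hN) (u, v) huv
  rcases s_val hK hN hT hj with ⟨hj0, hsu, hue⟩ | ⟨hj1, hsu⟩ <;>
    rcases s_val hK hN hT hk with ⟨hk0, hsv, hve⟩ | ⟨hk1, hsv⟩
  · exact Or.inl ⟨he, j, k, hj, hk, Or.inl (by omega)⟩
  · -- j = 0, k ≥ 1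
    have hsθ : (O.e0 u, O.t k) ∈ θ := by
      rw [← htrace]
      rw [hsu, hsv] at hs1
      exact ⟨hs1, e0_mem u, tmem hk1 hk.1⟩
    exact Or.inl ⟨he, j, k, hj, hk, Or.inr ⟨Or.inl hj0,
      Or.inr (htr _ _ _ (hsy _ _ hsθ) he)⟩⟩
  · -- j ≥ 1, k = 0
    have hsθ : (O.t j, O.e0 v) ∈ θ := by
      rw [← htrace]
      rw [hsu, hsv] at hs1
      exact ⟨hs1, tmem hj1 hj.1, e0_mem v⟩
    exact Or.inl ⟨he, j, k, hj, hk, Or.inr ⟨Or.inr (htr _ _ _ hsθ (hsy _ _ he)),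
      Or.inl hk0⟩⟩
  · -- j, k ≥ 1
    have hjK : j ≤ 2 := hK ▸ hj.1
    have hkK : k ≤ 2 := hK ▸ hk.1
    have hsθ : (O.t j, O.t k) ∈ θ := by
      rw [← htrace]
      rw [hsu, hsv] at hs1
      exact ⟨hs1, tmem hj1 hj.1, tmem hk1 hk.1⟩
    interval_cases j <;> interval_cases k
    · exact Or.inl ⟨he, 1, 1, hj, hk, Or.inl rfl⟩
    · refine Or.inr ⟨?_, he, e0_mem u, Or.inl ⟨hj, hk⟩⟩
      rw [← ht1, ← ht2]; exact hsθ
    · refine Or.inr ⟨?_, he, e0_mem u, Or.inr ⟨hj, hk⟩⟩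
      rw [← ht1, ← ht2]; exact hsy _ _ hsθ
    · exact Or.inl ⟨he, 2, 2, hj, hk, Or.inl rfl⟩

include hθ hK hN ht1 ht2 hT in
lemma big_isGreatest :
    IsGreatest {α : Set (A × A) | IsCon O.FA α ∧ α ∩ (O.B 0 ×ˢ O.B 0) = θ}
      (O.mid θ x y (O.B 0)) := by
  constructor
  · exact ⟨mid_iscon hθ hK hN ht1 ht2 hT (fun a _ b hab => (hθ.1.1 hab).2),
      mid_inter hθ⟩
  · exact fun α hα => con_subset_big hθ hK hN ht1 ht2 hT hα.1 hα.2

lemma mid_mono {W' : Set A} (h : W ⊆ W') : O.mid θ x y W ⊆ O.mid θ x y W' := by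
  rintro p (hp | ⟨hxy, he, hWm, hcr⟩)
  · exact Or.inl hp
  · exact Or.inr ⟨hxy, he, h hWm, hcr⟩

include hθ in
lemma star_eq_big_of_not (hxy : (x, y) ∉ θ) :
    O.mid θ x y (O.B 0) = O.star' θ := by
  apply Set.Subset.antisymm
  · rintro p (hp | hp)
    · exact hp
    · exact absurd hp.1 hxy
  · exact Set.subset_union_left

end MidCon

end OvI

end Overalg
namespace Overalg

set_option linter.unusedSectionVars false

namespace OvI

variable {A : Type*} {O : OvI A} {θ : Set (A × A)} {x y : A}

/-- Reindexing order-iso for powers of `Prop`. -/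
def reindexIso {ι κ : Type*} (e : ι ≃ κ) : (ι → Prop) ≃o (κ → Prop) where
  toFun P := fun k => P (e.symm k)
  invFun Q := fun i => Q (e i)
  left_inv P := by funext i; simp
  right_inv Q := by funext k; simp
  map_rel_iff' := by
    intro P P'
    constructor
    · intro h i
      have := h (e i)
      simpa using this
    · exact fun h k => h _

section Gen

variable (hθ : O.ConB θ) (hK : O.K = 2) (hN : O.N = 1)
  (ht1 : O.t 1 = x) (ht2 : O.t 2 = y) (hT : O.T 1 = {1, 2})
  (hxyθ : (x, y) ∈ θ)

include hθ hK hN ht1 ht2 hT hxyθ in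
lemma interval_iso_gen {ι : Type*} (c : ι → A)
    (hc : ∀ i, c i ∈ O.B 0)
    (hnot : ∀ i, (x, c i) ∉ θ)
    (hdis : ∀ i i', (c i, c i') ∈ θ → i = i')
    (hcover : ∀ u ∈ O.B 0, (x, u) ∉ θ → ∃ i, (c i, u) ∈ θ)
    (θs θh : Set (A × A))
    (hθs : IsLeast {α : Set (A × A) | IsCon O.FA α ∧ θ ⊆ α} θs)
    (hθh : IsGreatest {α : Set (A × A) | IsCon O.FA α ∧ α ∩ (O.B 0 ×ˢ O.B 0) = θ} θh) :
    Nonempty ({α : Set (A × A) // IsCon O.FA α ∧ θs ⊆ α ∧ α ⊆ θh} ≃o (ι → Prop)) := by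
  have htr := hθ.1.2.2.2
  have hsy := hθ.1.2.2.1
  have hre := hθ.1.2.1
  have h1K : 1 ≤ O.K := by omega
  have h2K : 2 ≤ O.K := by omega
  have hθseq : θs = O.star' θ :=
    hθs.unique (star'_isLeast hθ hK hN ht1 ht2 hT)
  have hθheq : θh = O.mid θ x y (O.B 0) :=
    hθh.unique (big_isGreatest hθ hK hN ht1 ht2 hT)
  -- the wing-gluing congruences
  set WP : (ι → Prop) → Set A := fun P => {a | ∃ i, P i ∧ (c i, a) ∈ θ} with hWP
  have hWsub : ∀ P, WP P ⊆ O.B 0 := by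
    rintro P a ⟨i, _, h⟩
    exact (hθ.1.1 h).2
  have hWsat : ∀ P, ∀ a ∈ WP P, ∀ b, (a, b) ∈ θ → b ∈ WP P := by
    rintro P a ⟨i, hPi, h⟩ b hab
    exact ⟨i, hPi, htr _ _ _ h hab⟩
  set Ψ : (ι → Prop) → Set (A × A) := fun P => O.mid θ x y (WP P) with hΨ
  have hΨcon : ∀ P, IsCon O.FA (Ψ P) := fun P =>
    mid_iscon hθ hK hN ht1 ht2 hT (hWsat P)
  have hΨlo : ∀ P, θs ⊆ Ψ P := by
    intro P
    rw [hθseq]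
    exact Set.subset_union_left
  have hΨhi : ∀ P, Ψ P ⊆ θh := by
    intro P
    rw [hθheq]
    exact mid_mono (hWsub P)
  -- the tie points of the wings
  set q1 : ι → A := fun i => O.π 1 (c i) with hq1def
  set q2 : ι → A := fun i => O.π 2 (c i) with hq2def
  have hq1 : ∀ i, O.Cp (q1 i) 1 ∧ O.e0 (q1 i) = c i := fun i => cp_pi h1K (hc i)
  have hq2 : ∀ i, O.Cp (q2 i) 2 ∧ O.e0 (q2 i) = c i := fun i => cp_pi h2K (hc i)
  -- left inverse
  have hA3 : ∀ P i, ((q1 i, q2 i) ∈ Ψ P) ↔ P i := by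
    intro P i
    constructor
    · rintro (⟨he, j', k', hj', hk', hd⟩ | ⟨_, he, hWm, _⟩)
      · exfalso
        have hj'1 : j' = 1 := by
          by_contra hne
          have h := cp_ne (hq1 i).1 hj' (fun h => hne h.symm) le_rfl
          rw [(hq1 i).2, ht1] at h
          exact hnot i (h ▸ hre x (ht1 ▸ tmem le_rfl h1K))
        have hk'2 : k' = 2 := by
          by_contra hne
          have h := cp_ne (hq2 i).1 hk' (fun h => hne h.symm) (by omega)
          rw [(hq2 i).2, ht2] at h
          exact hnot i (h ▸ hxyθ)
        subst hj'1; subst hk'2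
        rcases hd with h12 | ⟨htie, _⟩
        · omega
        · rcases htie with h0 | hmem
          · omega
          · rw [ht1, (hq1 i).2] at hmem
            exact hnot i hmem
      · obtain ⟨i', hPi', hrel'⟩ := hWm
        rw [(hq1 i).2] at hrel'
        rwa [hdis i' i hrel'] at hPi'
    · intro hPi
      right
      refine ⟨hxyθ, ?_, ?_, Or.inl ⟨(hq1 i).1, (hq2 i).1⟩⟩
      · rw [(hq1 i).2, (hq2 i).2]
        exact hre _ (hc i)
      · rw [(hq1 i).2]
        exact ⟨i, hPi, hre _ (hc i)⟩
  -- right inverse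
  have hA4 : ∀ α : Set (A × A), IsCon O.FA α → θs ⊆ α → α ⊆ θh →
      Ψ (fun i => (q1 i, q2 i) ∈ α) = α := by
    intro α hαc hαlo hαhi
    have hre' := hαc.1.1
    have hsy' := hαc.1.2.1
    have htr' := hαc.1.2.2
    have hstarα : O.star' θ ⊆ α := by rw [← hθseq]; exact hαlo
    apply Set.Subset.antisymm
    · rintro ⟨u, v⟩ (hst | ⟨_, he, ⟨i, hPi, hDi⟩, hcr⟩)
      · exact hstarα hst
      · have hcu : (c i, O.e0 u) ∈ θ := hDi
        have hcv : (c i, O.e0 v) ∈ θ := htr _ _ _ hcu he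
        rcases hcr with ⟨hu1, hv2⟩ | ⟨hu2, hv1⟩
        · have s1 : (q1 i, u) ∈ O.star' θ :=
            ⟨by rw [(hq1 i).2]; exact hcu, 1, 1, (hq1 i).1, hu1, Or.inl rfl⟩
          have s2 : (q2 i, v) ∈ O.star' θ :=
            ⟨by rw [(hq2 i).2]; exact hcv, 2, 2, (hq2 i).1, hv2, Or.inl rfl⟩
          exact htr' _ _ _ (hsy' _ _ (hstarα s1)) (htr' _ _ _ hPi (hstarα s2))
        · have s1 : (q2 i, u) ∈ O.star' θ :=
            ⟨by rw [(hq2 i).2]; exact hcu, 2, 2, (hq2 i).1, hu2, Or.inl rfl⟩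
          have s2 : (q1 i, v) ∈ O.star' θ :=
            ⟨by rw [(hq1 i).2]; exact hcv, 1, 1, (hq1 i).1, hv1, Or.inl rfl⟩
          exact htr' _ _ _ (hsy' _ _ (hstarα s1))
            (htr' _ _ _ (hsy' _ _ hPi) (hstarα s2))
    · intro p hp
      have hbig : p ∈ O.mid θ x y (O.B 0) := by rw [← hθheq]; exact hαhi hp
      obtain ⟨u, v⟩ := p
      rcases hbig with hst | ⟨_, he, _, hcr⟩
      · exact Or.inl hst
      · by_cases hTu : (x, O.e0 u) ∈ θ
        · exact Or.inl (glue_star hθ ht1 ht2 ⟨hxyθ, he, e0_mem u, hcr⟩ hTu)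
        · obtain ⟨i, hci⟩ := hcover (O.e0 u) (e0_mem u) hTu
          have hcv : (c i, O.e0 v) ∈ θ := htr _ _ _ hci he
          rcases hcr with ⟨hu1, hv2⟩ | ⟨hu2, hv1⟩
          · have s1 : (q1 i, u) ∈ O.star' θ :=
              ⟨by rw [(hq1 i).2]; exact hci, 1, 1, (hq1 i).1, hu1, Or.inl rfl⟩
            have s2 : (q2 i, v) ∈ O.star' θ :=
              ⟨by rw [(hq2 i).2]; exact hcv, 2, 2, (hq2 i).1, hv2, Or.inl rfl⟩
            have hqα : (q1 i, q2 i) ∈ α :=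
              htr' _ _ _ (hstarα s1) (htr' _ _ _ hp (hsy' _ _ (hstarα s2)))
            exact Or.inr ⟨hxyθ, he, ⟨i, hqα, hci⟩, Or.inl ⟨hu1, hv2⟩⟩
          · have s1 : (q2 i, u) ∈ O.star' θ :=
              ⟨by rw [(hq2 i).2]; exact hci, 2, 2, (hq2 i).1, hu2, Or.inl rfl⟩
            have s2 : (q1 i, v) ∈ O.star' θ :=
              ⟨by rw [(hq1 i).2]; exact hcv, 1, 1, (hq1 i).1, hv1, Or.inl rfl⟩
            have hqα : (q1 i, q2 i) ∈ α :=
              htr' _ _ _ (hstarα s2) (htr' _ _ _ (hsy' _ _ hp) (hsy' _ _ (hstarα s1)))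
            exact Or.inr ⟨hxyθ, he, ⟨i, hqα, hci⟩, Or.inr ⟨hu2, hv1⟩⟩
  -- assemble the order isomorphism
  refine ⟨⟨⟨fun α => fun i => (q1 i, q2 i) ∈ α.1,
      fun P => ⟨Ψ P, hΨcon P, hΨlo P, hΨhi P⟩, ?_, ?_⟩, ?_⟩⟩
  · intro α
    exact Subtype.ext (hA4 α.1 α.2.1 α.2.2.1 α.2.2.2)
  · intro P
    funext i
    exact propext (hA3 P i)
  · intro α α'
    constructor
    · intro h
      have hmono : Ψ (fun i => (q1 i, q2 i) ∈ α.1) ⊆ Ψ (fun i => (q1 i, q2 i) ∈ α'.1) := by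
        apply mid_mono
        rintro a ⟨i, hPi, hrel'⟩
        exact ⟨i, h i hPi, hrel'⟩
      rw [hA4 α.1 α.2.1 α.2.2.1 α.2.2.2, hA4 α'.1 α'.2.1 α'.2.2.1 α'.2.2.2] at hmono
      exact hmono
    · intro h i hi
      exact h hi

end Gen

end OvI

end Overalg
namespace Overalg

set_option linter.unusedSectionVars false

namespace OvI

variable {A : Type*} {O : OvI A} {θ : Set (A × A)} {x y : A}

lemma interval_iso (hθ : O.ConB θ) (hK : O.K = 2) (hN : O.N = 1)
    (ht1 : O.t 1 = x) (ht2 : O.t 2 = y) (hT : O.T 1 = {1, 2})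
    (hx : x ∈ O.B 0) (hxyθ : (x, y) ∈ θ)
    (r : ℕ) (D : Fin r → Set A)
    (hD : ∀ i : Fin r, ∃ c ∈ O.B 0, D i = O.cls θ c)
    (hDpart : ∀ u ∈ O.B 0, ∃! i : Fin r, u ∈ D i)
    (θs θh : Set (A × A))
    (hθs : IsLeast {α : Set (A × A) | IsCon O.FA α ∧ θ ⊆ α} θs)
    (hθh : IsGreatest {α : Set (A × A) | IsCon O.FA α ∧ α ∩ (O.B 0 ×ˢ O.B 0) = θ} θh) :
    Nonempty ({α : Set (A × A) // IsCon O.FA α ∧ θs ⊆ α ∧ α ⊆ θh} ≃o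
      (Fin (r - 1) → Prop)) := by
  have htr := hθ.1.2.2.2
  have hsy := hθ.1.2.2.1
  have hre := hθ.1.2.1
  choose c hc hDc using hD
  have hmemD : ∀ (i : Fin r) (a : A), a ∈ D i ↔ (c i, a) ∈ θ := by
    intro i a
    rw [hDc i]
    exact Iff.rfl
  obtain ⟨i0, hxi0, hi0u⟩ := hDpart x hx
  have hcD : ∀ i, c i ∈ D i := fun i => (hmemD i _).2 (hre _ (hc i))
  have huniq : ∀ (a : A) (i i' : Fin r), a ∈ D i → a ∈ D i' → i = i' := by
    intro a i i' h h'
    have hmem : a ∈ O.B 0 := (hθ.1.1 ((hmemD _ _).1 h)).2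
    obtain ⟨w, _, hw⟩ := hDpart a hmem
    exact (hw i h).trans (hw i' h').symm
  have hnot : ∀ s : {i : Fin r // i ≠ i0}, (x, c s.1) ∉ θ := by
    rintro ⟨i, hi⟩ h
    have hm : c i ∈ D i0 := (hmemD i0 _).2 (htr _ _ _ ((hmemD i0 x).1 hxi0) h)
    exact hi (huniq (c i) i i0 (hcD i) hm)
  have hdis : ∀ s s' : {i : Fin r // i ≠ i0}, (c s.1, c s'.1) ∈ θ → s = s' := by
    rintro ⟨i, hi⟩ ⟨i', hi'⟩ h
    have hm : c i' ∈ D i := (hmemD i _).2 h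
    exact Subtype.ext ((huniq (c i') i' i (hcD i') hm).symm)
  have hcover : ∀ u ∈ O.B 0, (x, u) ∉ θ →
      ∃ s : {i : Fin r // i ≠ i0}, (c s.1, u) ∈ θ := by
    intro u hu hxu
    obtain ⟨i, hi, _⟩ := hDpart u hu
    have hne : i ≠ i0 := by
      intro h
      subst h
      exact hxu (htr _ _ _ (hsy _ _ ((hmemD _ _).1 hxi0)) ((hmemD _ _).1 hi))
    exact ⟨⟨i, hne⟩, (hmemD _ _).1 hi⟩
  obtain ⟨E⟩ := interval_iso_gen hθ hK hN ht1 ht2 hT hxyθ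
    (fun s : {i : Fin r // i ≠ i0} => c s.1) (fun s => hc s.1) hnot hdis hcover
    θs θh hθs hθh
  have hcard : Fintype.card {i : Fin r // i ≠ i0} = r - 1 := by
    have h2 := Fintype.card_subtype_compl (fun i : Fin r => i = i0)
    simpa [Fintype.card_subtype_eq, Fintype.card_fin] using h2
  exact ⟨E.trans (reindexIso (Fintype.equivFinOfCardEq hcard))⟩

end OvI

end Overalg

open Overalg OvI in
/-- Let `β = Cg^𝐁(x,y)` be a principal congruence with `m` classes, and let `𝐀` be the
overalgebra of the first type with tie-point sequence `x, y` (`K = 2`) and the trivial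
partition (`N = 1`).  Then (1) `[β*, β̂] ≅ 𝟐^{m-1}`; (2) for every `θ ∈ Con 𝐁` with
`θ ≱ β`, `θ* = θ̂`; (3) for every `θ ∈ Con 𝐁` with `θ ≥ β` having `r` classes,
`[θ*, θ̂] ≅ 𝟐^{r-1}`. -/
theorem principal_overalgebra {A : Type*} (O : OvI A) (x y : A)
    (hx : x ∈ O.B 0) (hy : y ∈ O.B 0)
    (hK : O.K = 2) (hN : O.N = 1) (ht1 : O.t 1 = x) (ht2 : O.t 2 = y)
    (hT : O.T 1 = {1, 2})
    (β : Set (A × A)) (hβ : IsLeast {γ : Set (A × A) | O.ConB γ ∧ (x, y) ∈ γ} β)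
    (m : ℕ) (C : Fin m → Set A)
    (hCcls : ∀ r : Fin m, ∃ c ∈ O.B 0, C r = O.cls β c)
    (hCpart : ∀ u ∈ O.B 0, ∃! r : Fin m, u ∈ C r)
    (βs βh : Set (A × A))
    (hβs : IsLeast {α : Set (A × A) | IsCon O.FA α ∧ β ⊆ α} βs)
    (hβh : IsGreatest {α : Set (A × A) | IsCon O.FA α ∧ α ∩ (O.B 0 ×ˢ O.B 0) = β} βh) :
    Nonempty
      ({α : Set (A × A) // IsCon O.FA α ∧ βs ⊆ α ∧ α ⊆ βh} ≃o (Fin (m - 1) → Prop)) ∧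
    (∀ θ θs θh : Set (A × A), O.ConB θ → ¬ β ⊆ θ →
      IsLeast {α : Set (A × A) | IsCon O.FA α ∧ θ ⊆ α} θs →
      IsGreatest {α : Set (A × A) | IsCon O.FA α ∧ α ∩ (O.B 0 ×ˢ O.B 0) = θ} θh →
      θs = θh) ∧
    (∀ (θ θs θh : Set (A × A)) (r : ℕ) (D : Fin r → Set A), O.ConB θ → β ⊆ θ →
      (∀ i : Fin r, ∃ c ∈ O.B 0, D i = O.cls θ c) →
      (∀ u ∈ O.B 0, ∃! i : Fin r, u ∈ D i) →
      IsLeast {α : Set (A × A) | IsCon O.FA α ∧ θ ⊆ α} θs →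
      IsGreatest {α : Set (A × A) | IsCon O.FA α ∧ α ∩ (O.B 0 ×ˢ O.B 0) = θ} θh →
      Nonempty
        ({α : Set (A × A) // IsCon O.FA α ∧ θs ⊆ α ∧ α ⊆ θh} ≃o
          (Fin (r - 1) → Prop))) := by
  obtain ⟨⟨hβcon, hβxy⟩, hβlb⟩ := hβ
  refine ⟨?_, ?_, ?_⟩
  · exact interval_iso hβcon hK hN ht1 ht2 hT hx hβxy m C hCcls hCpart βs βh hβs hβh
  · intro θ θs θh hθ hnb hls hgr
    have hxyθ : (x, y) ∉ θ := fun h => hnb (hβlb ⟨hθ, h⟩)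
    have h1 : θs = O.star' θ := hls.unique (star'_isLeast hθ hK hN ht1 ht2 hT)
    have h2 : θh = O.mid θ x y (O.B 0) := hgr.unique (big_isGreatest hθ hK hN ht1 ht2 hT)
    rw [h1, h2]
    exact (star_eq_big_of_not hθ hxyθ).symm
  · intro θ θs θh r D hθ hβθ hD hDpart hls hgr
    exact interval_iso hθ hK hN ht1 ht2 hT hx (hβθ hβxy) r D hD hDpart θs θh hls hgr
end

section
/- In the overalgebra 𝐀 of the second type, the relation β⋆ = ⋃_{j=0}^{uK} β^j ∪ (⋃_{j=0}^{uK} t_j/β^j)² is a congruence of 𝐀, and it is the smallest congruence θ of 𝐀 satisfying θ∩(B×B) = β (that is, β⋆ = β*). -/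
namespace Overalg

/-- The data of an *overalgebra of the second type*, built over a finite base algebra
`𝐁 = ⟨B 0, F⟩` and the congruence `β = Cg^𝐁((a 1, b 1), …, (a (K-1), b (K-1)))`.
The universe is `A = B 0 ∪ B 1 ∪ ⋯ ∪ B (u*K)`, a chain of copies of `B 0` glued at
tie-points as in the paper; `π j : B 0 → B j` are bijections with inverses `σ j`;
`T 1 | ⋯ | T N` is a partition of the multiples of `K` in `{0, …, u*K}`, and the maps
`e j` are the retractions described in the construction. -/
structure OvII (A : Type*) where
  K : ℕ
  u : ℕ
  N : ℕ
  B : ℕ → Set A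
  F : Set (A → A)
  a : ℕ → A
  b : ℕ → A
  π : ℕ → A → A
  σ : ℕ → A → A
  T : ℕ → Set ℕ
  e : ℕ → A → A
  β : Set (A × A)
  hfin : Finite A
  hK : 2 ≤ K
  hu : 1 ≤ u
  /-- `A = B 0 ∪ ⋯ ∪ B (u*K)` -/
  hA : ∀ x : A, ∃ j ≤ u * K, x ∈ B j
  /-- the base operations map `B 0` into itself -/
  hF : ∀ f ∈ F, Set.MapsTo f (B 0) (B 0)
  /-- the generating pairs lie in `B 0` -/
  hab : ∀ i, 1 ≤ i → i ≤ K - 1 → a i ∈ B 0 ∧ b i ∈ B 0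
  /-- `π 0` is the identity -/
  hπ0 : ∀ x : A, π 0 x = x
  /-- `π j` is a bijection of `B 0` onto `B j` -/
  hπ : ∀ j ≤ u * K, Set.BijOn (π j) (B 0) (B j)
  /-- `σ j` inverts `π j` on `B 0` -/
  hσ : ∀ j ≤ u * K, ∀ c ∈ B 0, σ j (π j c) = c
  /-- `β` is the smallest congruence of `𝐁` containing the pairs `(a i, b i)` -/
  hβ : IsLeast {γ : Set (A × A) |
      (IsEquivOn (B 0) γ ∧ ∀ f ∈ F, ∀ p ∈ γ, (f p.1, f p.2) ∈ γ) ∧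
      ∀ i, 1 ≤ i → i ≤ K - 1 → (a i, b i) ∈ γ} β
  /-- adjacent intersections at a multiple of `K`:
  `B ℓ ∩ B (ℓ+1) = {a₁^ℓ} = {a₁^{ℓ+1}}` -/
  hadj0 : ∀ j < u * K, j % K = 0 →
    B j ∩ B (j + 1) = {π j (a 1)} ∧ π j (a 1) = π (j + 1) (a 1)
  /-- adjacent intersections in the middle of a segment:
  `B (ℓ+i) ∩ B (ℓ+i+1) = {b_i^{ℓ+i}} = {a_{i+1}^{ℓ+i+1}}` for `1 ≤ i ≤ K-2` -/
  hadjm : ∀ j < u * K, 1 ≤ j % K → j % K ≤ K - 2 →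
    B j ∩ B (j + 1) = {π j (b (j % K))} ∧ π j (b (j % K)) = π (j + 1) (a (j % K + 1))
  /-- adjacent intersections at the end of a segment:
  `B (ℓ+K-1) ∩ B (ℓ+K) = {b_{K-1}^{ℓ+K-1}} = {a₁^{ℓ+K}}` -/
  hadjl : ∀ j < u * K, j % K = K - 1 →
    B j ∩ B (j + 1) = {π j (b (K - 1))} ∧ π j (b (K - 1)) = π (j + 1) (a 1)
  /-- the triple meets: `B (ℓ-1) ∩ B (ℓ+1) = {a₁^ℓ}` for `ℓ` a positive multiple
  of `K` with `ℓ < u*K` -/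
  htriple : ∀ j, 0 < j → j + 1 ≤ u * K → j % K = 0 → B (j - 1) ∩ B (j + 1) = {π j (a 1)}
  /-- all other intersections are empty -/
  hempty : ∀ i j, i ≤ u * K → j ≤ u * K → i + 2 ≤ j →
    ¬(j = i + 2 ∧ (i + 1) % K = 0) → B i ∩ B j = ∅
  /-- each block `T n` consists of multiples of `K` that are at most `u*K` -/
  hT1 : ∀ n, 1 ≤ n → n ≤ N → T n ⊆ {j : ℕ | j ≤ u * K ∧ K ∣ j}
  /-- the blocks `T 1, …, T N` partition `{0, K, 2K, …, uK}` -/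
  hT2 : ∀ j ≤ u * K, K ∣ j → ∃! n, 1 ≤ n ∧ n ≤ N ∧ j ∈ T n
  /-- for `ℓ` a multiple of `K`: `e ℓ` maps `B j` onto `B ℓ` via `S_{j,ℓ}` when `j` is
  in the same block of the partition as `ℓ` … -/
  heK1 : ∀ n, 1 ≤ n → n ≤ N → ∀ ℓ ∈ T n, ∀ j ∈ T n, ∀ c ∈ B 0, e ℓ (π j c) = π ℓ c
  /-- … and sends everything else to the tie-point `a₁^ℓ` -/
  heK2 : ∀ n, 1 ≤ n → n ≤ N → ∀ ℓ ∈ T n, ∀ x : A, (∀ j ∈ T n, x ∉ B j) →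
    e ℓ x = π ℓ (a 1)
  /-- for `j = ℓ + i` with `1 ≤ i < K`: `e j` is the identity on `B j` … -/
  heM1 : ∀ j ≤ u * K, j % K ≠ 0 → ∀ x ∈ B j, e j x = x
  /-- … maps everything to the left of `B j` to the left tie-point `a_i^j` … -/
  heM2 : ∀ j ≤ u * K, j % K ≠ 0 → ∀ j' < j, ∀ x ∈ B j', x ∉ B j →
    e j x = π j (a (j % K))
  /-- … and everything to the right of `B j` to the right tie-point `b_i^j` -/
  heM3 : ∀ j ≤ u * K, j % K ≠ 0 → ∀ j', j < j' → j' ≤ u * K → ∀ x ∈ B j', x ∉ B j →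
    e j x = π j (b (j % K))

namespace OvII

variable {A : Type*} (O : OvII A)

/-- `q i j = S i j ∘ e i`; here `q i 0 = σ i ∘ e i` and `q 0 j = π j ∘ e 0`. -/
def qi0 (i : ℕ) : A → A := fun x => O.σ i (O.e i x)

/-- `q 0 j = π j ∘ e 0`. -/
def q0j (j : ℕ) : A → A := fun x => O.π j (O.e 0 x)

/-- The operations of the overalgebra:
`F_A = {f ∘ e 0 : f ∈ F} ∪ {q i 0 : 0 ≤ i ≤ uK} ∪ {q 0 j : 1 ≤ j ≤ uK}`. -/
def FA : Set (A → A) :=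
  {g | ∃ f ∈ O.F, g = f ∘ O.e 0} ∪ {g | ∃ i ≤ O.u * O.K, g = O.qi0 i} ∪
    {g | ∃ j, 1 ≤ j ∧ j ≤ O.u * O.K ∧ g = O.q0j j}

/-- A congruence of the base algebra `𝐁 = ⟨B 0, F⟩`. -/
def ConB (θ : Set (A × A)) : Prop :=
  IsEquivOn (O.B 0) θ ∧ ∀ f ∈ O.F, ∀ p ∈ θ, (f p.1, f p.2) ∈ θ

/-- A tie-point `t j` of `B j`: `a₁^j` when `K ∣ j`, and `a_i^j` when `j = ℓ + i`,
`1 ≤ i < K`. -/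
def tie (j : ℕ) : A := O.π j (O.a (if j % O.K = 0 then 1 else j % O.K))

/-- `β^j = {(π j x, π j y) : (x, y) ∈ β}`, the copy of `β` on `B j`. -/
def bj (j : ℕ) : Set (A × A) := {p | ∃ q ∈ O.β, p = (O.π j q.1, O.π j q.2)}

/-- `t j / β^j`, the `β^j`-class of the tie-point of `B j`. -/
def tcls (j : ℕ) : Set A := {x | (O.tie j, x) ∈ O.bj j}

/-- `β⋆ = ⋃_{j=0}^{uK} β^j ∪ (⋃_{j=0}^{uK} t_j/β^j)²`. -/
def bstar : Set (A × A) :=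
  {p | ∃ j ≤ O.u * O.K, p ∈ O.bj j} ∪
    {p | (∃ j ≤ O.u * O.K, p.1 ∈ O.tcls j) ∧ (∃ j ≤ O.u * O.K, p.2 ∈ O.tcls j)}

/-- The `θ`-class of `c`. -/
def cls (_O : OvII A) (θ : Set (A × A)) (c : A) : Set A := {x | (c, x) ∈ θ}

/-- For `c ∈ B 0` with `β`-class `C_r = c/β`, this is `⋃_{ℓ ∈ T n} C_r^ℓ`. -/
def wing (n : ℕ) (c : A) : Set A := ⋃ ℓ ∈ O.T n, O.π ℓ '' O.cls O.β c

/-- `β̃ = β⋆ ∪ ⋃_{r=1}^{m-1} ⋃_{n=1}^{N} (⋃_{ℓ ∈ 𝒯_n} C_r^ℓ)²`, where the classes of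
`β` other than the class of `a 1` are parametrized by their elements `c`. -/
def btilde : Set (A × A) :=
  O.bstar ∪
    {p | ∃ n, 1 ≤ n ∧ n ≤ O.N ∧ ∃ c ∈ O.B 0, (c, O.a 1) ∉ O.β ∧
      p.1 ∈ O.wing n c ∧ p.2 ∈ O.wing n c}

end OvII

end Overalg

namespace Overalg
namespace OvII

variable {A : Type*}

lemma bsub (O : OvII A) : O.β ⊆ O.B 0 ×ˢ O.B 0 := O.hβ.1.1.1.1

lemma brefl (O : OvII A) {x : A} (hx : x ∈ O.B 0) : (x, x) ∈ O.β := O.hβ.1.1.1.2.1 x hx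

lemma bsymm (O : OvII A) {x y : A} (h : (x, y) ∈ O.β) : (y, x) ∈ O.β := O.hβ.1.1.1.2.2.1 x y h

lemma btrans (O : OvII A) {x y z : A} (h : (x, y) ∈ O.β) (h' : (y, z) ∈ O.β) :
    (x, z) ∈ O.β := O.hβ.1.1.1.2.2.2 x y z h h'

lemma bgen (O : OvII A) {i : ℕ} (h1 : 1 ≤ i) (h2 : i ≤ O.K - 1) : (O.a i, O.b i) ∈ O.β :=
  O.hβ.1.2 i h1 h2

lemma bmem (O : OvII A) {x y : A} (h : (x, y) ∈ O.β) : x ∈ O.B 0 ∧ y ∈ O.B 0 := by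
  have := O.bsub h; simpa using this

lemma πmem (O : OvII A) {j : ℕ} (hj : j ≤ O.u * O.K) {c : A} (hc : c ∈ O.B 0) :
    O.π j c ∈ O.B j := (O.hπ j hj).1 hc

lemma πinj (O : OvII A) {j : ℕ} (hj : j ≤ O.u * O.K) {c d : A} (hc : c ∈ O.B 0)
    (hd : d ∈ O.B 0) (h : O.π j c = O.π j d) : c = d := (O.hπ j hj).2.1 hc hd h

lemma πsurj (O : OvII A) {j : ℕ} (hj : j ≤ O.u * O.K) {x : A} (hx : x ∈ O.B j) :
    ∃ c ∈ O.B 0, O.π j c = x := (O.hπ j hj).2.2 hx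

lemma aB0 (O : OvII A) {i : ℕ} (h1 : 1 ≤ i) (h2 : i ≤ O.K - 1) : O.a i ∈ O.B 0 :=
  (O.hab i h1 h2).1

lemma bB0 (O : OvII A) {i : ℕ} (h1 : 1 ≤ i) (h2 : i ≤ O.K - 1) : O.b i ∈ O.B 0 :=
  (O.hab i h1 h2).2

lemma a1B0 (O : OvII A) : O.a 1 ∈ O.B 0 := O.aB0 le_rfl (by have := O.hK; omega)

lemma tidx_bounds (O : OvII A) (j : ℕ) :
    1 ≤ (if j % O.K = 0 then 1 else j % O.K) ∧
      (if j % O.K = 0 then 1 else j % O.K) ≤ O.K - 1 := by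
  have hK := O.hK
  have : j % O.K < O.K := Nat.mod_lt _ (by omega)
  split <;> omega

lemma tidxB0 (O : OvII A) (j : ℕ) : O.a (if j % O.K = 0 then 1 else j % O.K) ∈ O.B 0 :=
  O.aB0 (O.tidx_bounds j).1 (O.tidx_bounds j).2

lemma bj_iff (O : OvII A) {j : ℕ} {x y : A} :
    (x, y) ∈ O.bj j ↔ ∃ p q, (p, q) ∈ O.β ∧ x = O.π j p ∧ y = O.π j q := by
  constructor
  · rintro ⟨⟨p, q⟩, hpq, heq⟩
    exact ⟨p, q, hpq, congrArg Prod.fst heq, congrArg Prod.snd heq⟩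
  · rintro ⟨p, q, hpq, rfl, rfl⟩
    exact ⟨(p, q), hpq, rfl⟩

lemma tcls_iff (O : OvII A) {j : ℕ} (hj : j ≤ O.u * O.K) {x : A} :
    x ∈ O.tcls j ↔
      ∃ q ∈ O.B 0, x = O.π j q ∧ (O.a (if j % O.K = 0 then 1 else j % O.K), q) ∈ O.β := by
  constructor
  · intro h
    have h' : (O.tie j, x) ∈ O.bj j := h
    rw [O.bj_iff] at h'
    obtain ⟨p, q, hpq, h1, h2⟩ := h'
    obtain ⟨hp, hq⟩ := O.bmem hpq
    have h1' : O.π j (O.a (if j % O.K = 0 then 1 else j % O.K)) = O.π j p := h1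
    have := O.πinj hj (O.tidxB0 j) hp h1'
    exact ⟨q, hq, h2, this ▸ hpq⟩
  · rintro ⟨q, hq, rfl, hrel⟩
    show (O.tie j, O.π j q) ∈ O.bj j
    rw [O.bj_iff]
    exact ⟨_, q, hrel, rfl, rfl⟩

lemma tcls_sub (O : OvII A) {j : ℕ} (hj : j ≤ O.u * O.K) {x : A} (hx : x ∈ O.tcls j) :
    x ∈ O.B j := by
  obtain ⟨q, hq, rfl, -⟩ := (O.tcls_iff hj).1 hx
  exact O.πmem hj hq

lemma tcls_of_rep (O : OvII A) {j : ℕ} (hj : j ≤ O.u * O.K) {x w : A} (hw : w ∈ O.B 0)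
    (hxw : x = O.π j w) (hrel : (O.a (if j % O.K = 0 then 1 else j % O.K), w) ∈ O.β) :
    x ∈ O.tcls j := (O.tcls_iff hj).2 ⟨w, hw, hxw, hrel⟩

lemma bj0 (O : OvII A) {x y : A} : (x, y) ∈ O.bj 0 ↔ (x, y) ∈ O.β := by
  rw [O.bj_iff]
  constructor
  · rintro ⟨p, q, hpq, rfl, rfl⟩
    rw [O.hπ0, O.hπ0]; exact hpq
  · intro h
    exact ⟨x, y, h, (O.hπ0 x).symm, (O.hπ0 y).symm⟩

lemma bj_symm (O : OvII A) {j : ℕ} {x y : A} (h : (x, y) ∈ O.bj j) : (y, x) ∈ O.bj j := by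
  rw [O.bj_iff] at h ⊢
  obtain ⟨p, q, hpq, rfl, rfl⟩ := h
  exact ⟨q, p, O.bsymm hpq, rfl, rfl⟩

lemma bj_trans (O : OvII A) {j : ℕ} (hj : j ≤ O.u * O.K) {x y z : A}
    (h1 : (x, y) ∈ O.bj j) (h2 : (y, z) ∈ O.bj j) : (x, z) ∈ O.bj j := by
  rw [O.bj_iff] at h1 h2 ⊢
  obtain ⟨p, q, hpq, rfl, rfl⟩ := h1
  obtain ⟨p', q', hpq', hq, rfl⟩ := h2
  have : q = p' := O.πinj hj (O.bmem hpq).2 (O.bmem hpq').1 hq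
  exact ⟨p, q', O.btrans hpq (this ▸ hpq'), rfl, rfl⟩

lemma bj_memL (O : OvII A) {j : ℕ} (hj : j ≤ O.u * O.K) {x y : A} (h : (x, y) ∈ O.bj j) :
    x ∈ O.B j := by
  rw [O.bj_iff] at h
  obtain ⟨p, q, hpq, rfl, -⟩ := h
  exact O.πmem hj (O.bmem hpq).1

lemma bj_memR (O : OvII A) {j : ℕ} (hj : j ≤ O.u * O.K) {x y : A} (h : (x, y) ∈ O.bj j) :
    y ∈ O.B j := O.bj_memL hj (O.bj_symm h)

lemma tcls_closed (O : OvII A) {j : ℕ} (hj : j ≤ O.u * O.K) {x y : A} (hx : x ∈ O.tcls j)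
    (hxy : (x, y) ∈ O.bj j) : y ∈ O.tcls j := by
  have hx' : (O.tie j, x) ∈ O.bj j := hx
  exact O.bj_trans hj hx' hxy

lemma tcls_of_bj (O : OvII A) {j : ℕ} (hj : j ≤ O.u * O.K) {x y : A} (h : (x, y) ∈ O.bj j)
    (hy : y ∈ O.tcls j) : x ∈ O.tcls j := O.tcls_closed hj hy (O.bj_symm h)

lemma succ_mod_of (O : OvII A) {i : ℕ} (h : i % O.K + 1 < O.K) : (i + 1) % O.K = i % O.K + 1 := by
  have hK := O.hK
  conv_lhs => rw [Nat.add_mod]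
  rw [Nat.mod_eq_of_lt (by omega : 1 < O.K), Nat.mod_eq_of_lt h]

lemma succ_mod_top (O : OvII A) {i : ℕ} (h : i % O.K = O.K - 1) : (i + 1) % O.K = 0 := by
  have hK := O.hK
  conv_lhs => rw [Nat.add_mod]
  rw [Nat.mod_eq_of_lt (by omega : 1 < O.K), h]
  have h2 : O.K - 1 + 1 = O.K := by omega
  rw [h2, Nat.mod_self]

lemma pred_mod (O : OvII A) {i : ℕ} (h : (i + 1) % O.K = 0) : i % O.K = O.K - 1 := by
  have hK := O.hK
  have h2 : i % O.K < O.K := Nat.mod_lt _ (by omega)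
  by_contra hne
  have := O.succ_mod_of (i := i) (by omega)
  omega

end OvII
end Overalg

namespace Overalg
namespace OvII

variable {A : Type*}

lemma tieLem' (O : OvII A) {i j : ℕ} (hj : j ≤ O.u * O.K) (hij : i < j) {x : A}
    (hx : x ∈ O.B i ∩ O.B j) : x ∈ O.tcls i ∧ x ∈ O.tcls j := by
  have hK := O.hK
  have hi : i ≤ O.u * O.K := by omega
  have hmodi : i % O.K < O.K := Nat.mod_lt _ (by omega)
  rcases Nat.lt_or_ge (i + 1) j with hgap | hadj
  · -- j ≥ i + 2
    by_cases hc : j = i + 2 ∧ (i + 1) % O.K = 0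
    · obtain ⟨rfl, hm⟩ := hc
      have htr := O.htriple (i + 1) (by omega) (by omega) hm
      have hx' : x = O.π (i + 1) (O.a 1) := by
        have hmem : x ∈ O.B (i + 1 - 1) ∩ O.B (i + 1 + 1) := by
          simpa using hx
        rw [htr] at hmem
        exact hmem
      have hmi : i % O.K = O.K - 1 := O.pred_mod hm
      have hl := O.hadjl i (by omega) hmi
      have h0 := O.hadj0 (i + 1) (by omega) hm
      constructor
      · refine O.tcls_of_rep hi (O.bB0 (i := O.K - 1) (by omega) le_rfl) ?_ ?_
        · rw [hx', ← hl.2]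
        · rw [if_neg (by omega), hmi]
          exact O.bgen (i := O.K - 1) (by omega) le_rfl
      · have hm2 : (i + 2) % O.K = 1 := by
          have h := O.succ_mod_of (i := i + 1) (by omega)
          rw [hm] at h
          exact h
        refine O.tcls_of_rep hj O.a1B0 ?_ ?_
        · rw [hx', h0.2]
        · rw [if_neg (by omega), hm2]
          exact O.brefl O.a1B0
    · have := O.hempty i j hi hj (by omega) hc
      rw [this] at hx
      exact absurd hx (Set.notMem_empty x)
  · -- j = i + 1
    have hj1 : j = i + 1 := by omega
    subst hj1
    by_cases hm0 : i % O.K = 0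
    · have h0 := O.hadj0 i (by omega) hm0
      have hx' : x = O.π i (O.a 1) := by rw [h0.1] at hx; exact hx
      have hm1 : (i + 1) % O.K = 1 := by
        have h := O.succ_mod_of (i := i) (by omega)
        rw [hm0] at h
        exact h
      constructor
      · exact O.tcls_of_rep hi O.a1B0 (by rw [hx']) (by rw [if_pos hm0]; exact O.brefl O.a1B0)
      · refine O.tcls_of_rep hj O.a1B0 ?_ ?_
        · rw [hx', h0.2]
        · rw [if_neg (by omega), hm1]
          exact O.brefl O.a1B0
    · by_cases htop : i % O.K = O.K - 1
      · have hl := O.hadjl i (by omega) htop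
        have hx' : x = O.π i (O.b (O.K - 1)) := by rw [hl.1] at hx; exact hx
        have hm1 : (i + 1) % O.K = 0 := O.succ_mod_top htop
        constructor
        · refine O.tcls_of_rep hi (O.bB0 (i := O.K - 1) (by omega) le_rfl) (by rw [hx']) ?_
          rw [if_neg hm0, htop]
          exact O.bgen (i := O.K - 1) (by omega) le_rfl
        · refine O.tcls_of_rep hj O.a1B0 ?_ ?_
          · rw [hx', hl.2]
          · rw [if_pos hm1]
            exact O.brefl O.a1B0
      · -- 1 ≤ i % K ≤ K - 2
        have hmid := O.hadjm i (by omega) (by omega) (by omega)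
        have hx' : x = O.π i (O.b (i % O.K)) := by rw [hmid.1] at hx; exact hx
        have hm1 : (i + 1) % O.K = i % O.K + 1 := O.succ_mod_of (by omega)
        constructor
        · refine O.tcls_of_rep hi (O.bB0 (i := i % O.K) (by omega) (by omega)) (by rw [hx']) ?_
          rw [if_neg hm0]
          exact O.bgen (i := i % O.K) (by omega) (by omega)
        · refine O.tcls_of_rep hj (O.aB0 (i := i % O.K + 1) (by omega) (by omega)) ?_ ?_
          · rw [hx', hmid.2]
          · rw [if_neg (by omega), hm1]
            exact O.brefl (O.aB0 (i := i % O.K + 1) (by omega) (by omega))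
  
lemma tieLem (O : OvII A) {i j : ℕ} (hi : i ≤ O.u * O.K) (hj : j ≤ O.u * O.K) (hne : i ≠ j)
    {x : A} (hx : x ∈ O.B i ∩ O.B j) : x ∈ O.tcls i ∧ x ∈ O.tcls j := by
  rcases Nat.lt_or_ge i j with h | h
  · exact O.tieLem' hj h hx
  · have := O.tieLem' hi (by omega) ⟨hx.2, hx.1⟩
    exact ⟨this.2, this.1⟩

lemma adjPoint (O : OvII A) {j : ℕ} (hj : j < O.u * O.K) : ∃ s, s ∈ O.B j ∩ O.B (j + 1) := by
  have hK := O.hK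
  have hm : j % O.K < O.K := Nat.mod_lt _ (by omega)
  by_cases h0 : j % O.K = 0
  · exact ⟨O.π j (O.a 1), by rw [(O.hadj0 j hj h0).1]; rfl⟩
  · by_cases htop : j % O.K = O.K - 1
    · exact ⟨O.π j (O.b (O.K - 1)), by rw [(O.hadjl j hj htop).1]; rfl⟩
    · exact ⟨O.π j (O.b (j % O.K)), by rw [(O.hadjm j hj (by omega) (by omega)).1]; rfl⟩

end OvII
end Overalg

namespace Overalg
namespace OvII

variable {A : Type*}

lemma eK_out (O : OvII A) {ℓ n : ℕ} (hn1 : 1 ≤ n) (hn2 : n ≤ O.N) (hℓn : ℓ ∈ O.T n)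
    {j : ℕ} (hj : j ≤ O.u * O.K) (hjn : j ∉ O.T n) {x : A} (hx : x ∈ O.B j) :
    ∃ c ∈ O.B 0, O.e ℓ x = O.π ℓ c ∧ (c, O.a 1) ∈ O.β := by
  by_cases hin : ∃ j' ∈ O.T n, x ∈ O.B j'
  · obtain ⟨j', hj'n, hxj'⟩ := hin
    have hj'uk : j' ≤ O.u * O.K := (O.hT1 n hn1 hn2 hj'n).1
    have hj'K : O.K ∣ j' := (O.hT1 n hn1 hn2 hj'n).2
    obtain ⟨c, hc, rfl⟩ := O.πsurj hj'uk hxj'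
    have he : O.e ℓ (O.π j' c) = O.π ℓ c := O.heK1 n hn1 hn2 ℓ hℓn j' hj'n c hc
    have hne : j ≠ j' := fun h => hjn (h ▸ hj'n)
    have htc := (O.tieLem hj hj'uk hne ⟨hx, hxj'⟩).2
    rw [O.tcls_iff hj'uk] at htc
    obtain ⟨q, hq, hqe, hrel⟩ := htc
    have hmod : j' % O.K = 0 := Nat.mod_eq_zero_of_dvd hj'K
    have hcq : c = q := O.πinj hj'uk hc hq hqe
    rw [if_pos hmod] at hrel
    exact ⟨c, hc, he, O.bsymm (hcq ▸ hrel)⟩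
  · push_neg at hin
    exact ⟨O.a 1, O.a1B0, O.heK2 n hn1 hn2 ℓ hℓn x hin, O.brefl O.a1B0⟩

lemma coreK_half (O : OvII A) {ℓ n : ℕ} (hn1 : 1 ≤ n) (hn2 : n ≤ O.N) (hℓn : ℓ ∈ O.T n)
    {j : ℕ} (hj : j ≤ O.u * O.K) {x : A} (hx : x ∈ O.tcls j) :
    ∃ c ∈ O.B 0, O.e ℓ x = O.π ℓ c ∧ (c, O.a 1) ∈ O.β := by
  by_cases hjn : j ∈ O.T n
  · have hjK : O.K ∣ j := (O.hT1 n hn1 hn2 hjn).2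
    have hmod : j % O.K = 0 := Nat.mod_eq_zero_of_dvd hjK
    rw [O.tcls_iff hj] at hx
    obtain ⟨q, hq, rfl, hrel⟩ := hx
    rw [if_pos hmod] at hrel
    exact ⟨q, hq, O.heK1 n hn1 hn2 ℓ hℓn j hjn q hq, O.bsymm hrel⟩
  · exact O.eK_out hn1 hn2 hℓn hj hjn (O.tcls_sub hj hx)

lemma coreK (O : OvII A) {ℓ : ℕ} (hℓ : ℓ ≤ O.u * O.K) (hd : O.K ∣ ℓ) {x y : A}
    (hxy : (x, y) ∈ O.bstar) :
    ∃ c d, c ∈ O.B 0 ∧ d ∈ O.B 0 ∧ O.e ℓ x = O.π ℓ c ∧ O.e ℓ y = O.π ℓ d ∧ (c, d) ∈ O.β := by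
  obtain ⟨n, ⟨hn1, hn2, hℓn⟩, -⟩ := O.hT2 ℓ hℓ hd
  rcases hxy with ⟨j, hj, hbj⟩ | ⟨⟨j1, hj1, hx⟩, ⟨j2, hj2, hy⟩⟩
  · rw [O.bj_iff] at hbj
    obtain ⟨p, q, hpq, rfl, rfl⟩ := hbj
    by_cases hjn : j ∈ O.T n
    · exact ⟨p, q, (O.bmem hpq).1, (O.bmem hpq).2,
        O.heK1 n hn1 hn2 ℓ hℓn j hjn p (O.bmem hpq).1,
        O.heK1 n hn1 hn2 ℓ hℓn j hjn q (O.bmem hpq).2, hpq⟩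
    · obtain ⟨c, hc, hce, hca⟩ := O.eK_out hn1 hn2 hℓn hj hjn (O.πmem hj (O.bmem hpq).1)
      obtain ⟨d, hd', hde, hda⟩ := O.eK_out hn1 hn2 hℓn hj hjn (O.πmem hj (O.bmem hpq).2)
      exact ⟨c, d, hc, hd', hce, hde, O.btrans hca (O.bsymm hda)⟩
  · obtain ⟨c, hc, hce, hca⟩ := O.coreK_half hn1 hn2 hℓn hj1 hx
    obtain ⟨d, hd', hde, hda⟩ := O.coreK_half hn1 hn2 hℓn hj2 hy
    exact ⟨c, d, hc, hd', hce, hde, O.btrans hca (O.bsymm hda)⟩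

lemma eM_out (O : OvII A) {j : ℕ} (hj : j ≤ O.u * O.K) (hm : j % O.K ≠ 0) {j' : ℕ}
    (hj' : j' ≤ O.u * O.K) (hne : j' ≠ j) {x : A} (hx : x ∈ O.B j') :
    ∃ c ∈ O.B 0, O.e j x = O.π j c ∧ (c, O.a (j % O.K)) ∈ O.β := by
  have hK := O.hK
  have hmlt : j % O.K < O.K := Nat.mod_lt _ (by omega)
  by_cases hxB : x ∈ O.B j
  · have htc := (O.tieLem hj hj' (fun h => hne h.symm) ⟨hxB, hx⟩).1
    rw [O.tcls_iff hj] at htc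
    obtain ⟨q, hq, rfl, hrel⟩ := htc
    rw [if_neg hm] at hrel
    exact ⟨q, hq, O.heM1 j hj hm _ hxB, O.bsymm hrel⟩
  · rcases Nat.lt_or_ge j' j with hlt | hge
    · exact ⟨O.a (j % O.K), O.aB0 (i := j % O.K) (by omega) (by omega),
        O.heM2 j hj hm j' hlt x hx hxB, O.brefl (O.aB0 (i := j % O.K) (by omega) (by omega))⟩
    · have hlt : j < j' := by omega
      exact ⟨O.b (j % O.K), O.bB0 (i := j % O.K) (by omega) (by omega),
        O.heM3 j hj hm j' hlt hj' x hx hxB,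
        O.bsymm (O.bgen (i := j % O.K) (by omega) (by omega))⟩

lemma coreM_half (O : OvII A) {j : ℕ} (hj : j ≤ O.u * O.K) (hm : j % O.K ≠ 0) {j1 : ℕ}
    (hj1 : j1 ≤ O.u * O.K) {x : A} (hx : x ∈ O.tcls j1) :
    ∃ c ∈ O.B 0, O.e j x = O.π j c ∧ (c, O.a (j % O.K)) ∈ O.β := by
  by_cases hje : j1 = j
  · subst hje
    rw [O.tcls_iff hj1] at hx
    obtain ⟨q, hq, rfl, hrel⟩ := hx
    rw [if_neg hm] at hrel
    exact ⟨q, hq, O.heM1 j1 hj1 hm _ (O.πmem hj1 hq), O.bsymm hrel⟩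
  · exact O.eM_out hj hm hj1 hje (O.tcls_sub hj1 hx)

lemma coreM (O : OvII A) {j : ℕ} (hj : j ≤ O.u * O.K) (hm : j % O.K ≠ 0) {x y : A}
    (hxy : (x, y) ∈ O.bstar) :
    ∃ c d, c ∈ O.B 0 ∧ d ∈ O.B 0 ∧ O.e j x = O.π j c ∧ O.e j y = O.π j d ∧ (c, d) ∈ O.β := by
  rcases hxy with ⟨j'', hj'', hbj⟩ | ⟨⟨j1, hj1, hx⟩, ⟨j2, hj2, hy⟩⟩
  · rw [O.bj_iff] at hbj
    obtain ⟨p, q, hpq, rfl, rfl⟩ := hbj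
    by_cases hje : j'' = j
    · subst hje
      exact ⟨p, q, (O.bmem hpq).1, (O.bmem hpq).2,
        O.heM1 j'' hj'' hm _ (O.πmem hj'' (O.bmem hpq).1),
        O.heM1 j'' hj'' hm _ (O.πmem hj'' (O.bmem hpq).2), hpq⟩
    · obtain ⟨c, hc, hce, hca⟩ := O.eM_out hj hm hj'' hje (O.πmem hj'' (O.bmem hpq).1)
      obtain ⟨d, hd', hde, hda⟩ := O.eM_out hj hm hj'' hje (O.πmem hj'' (O.bmem hpq).2)
      exact ⟨c, d, hc, hd', hce, hde, O.btrans hca (O.bsymm hda)⟩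
  · obtain ⟨c, hc, hce, hca⟩ := O.coreM_half hj hm hj1 hx
    obtain ⟨d, hd', hde, hda⟩ := O.coreM_half hj hm hj2 hy
    exact ⟨c, d, hc, hd', hce, hde, O.btrans hca (O.bsymm hda)⟩

end OvII
end Overalg

namespace Overalg
namespace OvII

variable {A : Type*}

lemma bstar_refl (O : OvII A) (x : A) : (x, x) ∈ O.bstar := by
  obtain ⟨j, hj, hx⟩ := O.hA x
  obtain ⟨c, hc, rfl⟩ := O.πsurj hj hx
  exact Set.mem_union_left _ ⟨j, hj, O.bj_iff.2 ⟨c, c, O.brefl hc, rfl, rfl⟩⟩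

lemma bstar_symm (O : OvII A) {x y : A} (h : (x, y) ∈ O.bstar) : (y, x) ∈ O.bstar := by
  rcases h with ⟨j, hj, h⟩ | ⟨hx, hy⟩
  · exact Set.mem_union_left _ ⟨j, hj, O.bj_symm h⟩
  · exact Set.mem_union_right _ ⟨hy, hx⟩

lemma bstar_trans (O : OvII A) {x y z : A} (h1 : (x, y) ∈ O.bstar)
    (h2 : (y, z) ∈ O.bstar) : (x, z) ∈ O.bstar := by
  rcases h1 with ⟨j, hj, h1⟩ | ⟨hx, ⟨j1, hj1, hy⟩⟩
  · rcases h2 with ⟨j', hj', h2⟩ | ⟨⟨j1, hj1, hy⟩, hz⟩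
    · by_cases hje : j = j'
      · subst hje
        exact Set.mem_union_left _ ⟨j, hj, O.bj_trans hj h1 h2⟩
      · have hyt := O.tieLem hj hj' hje ⟨O.bj_memR hj h1, O.bj_memL hj' h2⟩
        refine Set.mem_union_right _ ⟨⟨j, hj, O.tcls_of_bj hj h1 hyt.1⟩,
          ⟨j', hj', O.tcls_closed hj' hyt.2 h2⟩⟩
    · by_cases hje : j = j1
      · subst hje
        exact Set.mem_union_right _ ⟨⟨j, hj, O.tcls_of_bj hj h1 hy⟩, hz⟩
      · have hyt := (O.tieLem hj hj1 hje ⟨O.bj_memR hj h1, O.tcls_sub hj1 hy⟩).1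
        exact Set.mem_union_right _ ⟨⟨j, hj, O.tcls_of_bj hj h1 hyt⟩, hz⟩
  · rcases h2 with ⟨j', hj', h2⟩ | ⟨⟨j2, hj2, hy'⟩, hz⟩
    · by_cases hje : j1 = j'
      · subst hje
        exact Set.mem_union_right _ ⟨hx, ⟨j1, hj1, O.tcls_closed hj1 hy h2⟩⟩
      · have hyt := (O.tieLem hj1 hj' hje ⟨O.tcls_sub hj1 hy, O.bj_memL hj' h2⟩).2
        exact Set.mem_union_right _ ⟨hx, ⟨j', hj', O.tcls_closed hj' hyt h2⟩⟩
    · exact Set.mem_union_right _ ⟨hx, hz⟩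

lemma bstar_isCon (O : OvII A) : IsCon O.FA O.bstar := by
  refine ⟨⟨O.bstar_refl, fun x y h => O.bstar_symm h, fun x y z h1 h2 => O.bstar_trans h1 h2⟩, ?_⟩
  rintro g hg ⟨x, y⟩ hp
  have h0uk : (0 : ℕ) ≤ O.u * O.K := Nat.zero_le _
  rcases hg with (⟨f, hf, rfl⟩ | ⟨i, hi, rfl⟩) | ⟨jj, hjj1, hjj2, rfl⟩
  · -- f ∘ e 0
    obtain ⟨c, d, hc, hd, hce, hde, hcd⟩ := O.coreK h0uk (dvd_zero _) hp
    have h1 : O.e 0 x = c := by rw [hce, O.hπ0]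
    have h2 : O.e 0 y = d := by rw [hde, O.hπ0]
    refine Set.mem_union_left _ ⟨0, h0uk, ?_⟩
    refine O.bj_iff.2 ⟨f c, f d, O.hβ.1.1.2 f hf (c, d) hcd, ?_, ?_⟩
    · show f (O.e 0 x) = O.π 0 (f c)
      rw [O.hπ0, h1]
    · show f (O.e 0 y) = O.π 0 (f d)
      rw [O.hπ0, h2]
  · -- qi0 i
    by_cases him : i % O.K = 0
    · obtain ⟨c, d, hc, hd, hce, hde, hcd⟩ := O.coreK hi (Nat.dvd_of_mod_eq_zero him) hp
      have h1 : O.qi0 i x = c := by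
        show O.σ i (O.e i x) = c
        rw [hce]; exact O.hσ i hi c hc
      have h2 : O.qi0 i y = d := by
        show O.σ i (O.e i y) = d
        rw [hde]; exact O.hσ i hi d hd
      refine Set.mem_union_left _ ⟨0, h0uk, ?_⟩
      show (O.qi0 i x, O.qi0 i y) ∈ O.bj 0
      rw [h1, h2]
      exact O.bj0.2 hcd
    · obtain ⟨c, d, hc, hd, hce, hde, hcd⟩ := O.coreM hi him hp
      have h1 : O.qi0 i x = c := by
        show O.σ i (O.e i x) = c
        rw [hce]; exact O.hσ i hi c hc
      have h2 : O.qi0 i y = d := by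
        show O.σ i (O.e i y) = d
        rw [hde]; exact O.hσ i hi d hd
      refine Set.mem_union_left _ ⟨0, h0uk, ?_⟩
      show (O.qi0 i x, O.qi0 i y) ∈ O.bj 0
      rw [h1, h2]
      exact O.bj0.2 hcd
  · -- q0j jj
    obtain ⟨c, d, hc, hd, hce, hde, hcd⟩ := O.coreK h0uk (dvd_zero _) hp
    refine Set.mem_union_left _ ⟨jj, hjj2, ?_⟩
    show (O.q0j jj x, O.q0j jj y) ∈ O.bj jj
    refine O.bj_iff.2 ⟨c, d, hcd, ?_, ?_⟩
    · show O.π jj (O.e 0 x) = O.π jj c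
      rw [hce, O.hπ0]
    · show O.π jj (O.e 0 y) = O.π jj d
      rw [hde, O.hπ0]

end OvII
end Overalg

namespace Overalg
namespace OvII

variable {A : Type*}

lemma tcls_zero_beta (O : OvII A) {z : A} {j : ℕ} (hj : j ≤ O.u * O.K) (hz0 : z ∈ O.B 0)
    (hzt : z ∈ O.tcls j) : (O.a 1, z) ∈ O.β := by
  have h0 : (0 : ℕ) ≤ O.u * O.K := Nat.zero_le _
  have hzt0 : z ∈ O.tcls 0 := by
    by_cases hj0 : j = 0
    · exact hj0 ▸ hzt
    · exact (O.tieLem h0 hj (fun h => hj0 h.symm) ⟨hz0, O.tcls_sub hj hzt⟩).1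
  rw [O.tcls_iff h0] at hzt0
  obtain ⟨q, hq, hzq, hrel⟩ := hzt0
  rw [if_pos (Nat.zero_mod _)] at hrel
  rw [hzq, O.hπ0]
  exact hrel

lemma bstar_inter (O : OvII A) : O.bstar ∩ (O.B 0 ×ˢ O.B 0) = O.β := by
  ext ⟨x, y⟩
  simp only [Set.mem_inter_iff, Set.mem_prod]
  constructor
  · rintro ⟨hst, hx0, hy0⟩
    have h0 : (0 : ℕ) ≤ O.u * O.K := Nat.zero_le _
    rcases hst with ⟨j, hj, hbj⟩ | ⟨⟨j1, hj1, hx⟩, ⟨j2, hj2, hy⟩⟩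
    · by_cases hj0 : j = 0
      · subst hj0; exact O.bj0.1 hbj
      · have hxt := (O.tieLem h0 hj (fun h => hj0 h.symm) ⟨hx0, O.bj_memL hj hbj⟩).2
        have hyt := (O.tieLem h0 hj (fun h => hj0 h.symm) ⟨hy0, O.bj_memR hj hbj⟩).2
        have h1 := O.tcls_zero_beta hj hx0 hxt
        have h2 := O.tcls_zero_beta hj hy0 hyt
        exact O.btrans (O.bsymm h1) h2
    · have h1 := O.tcls_zero_beta hj1 hx0 hx
      have h2 := O.tcls_zero_beta hj2 hy0 hy
      exact O.btrans (O.bsymm h1) h2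
  · intro h
    exact ⟨Set.mem_union_left _ ⟨0, Nat.zero_le _, O.bj0.2 h⟩, (O.bmem h).1, (O.bmem h).2⟩

lemma e0_fix (O : OvII A) {c : A} (hc : c ∈ O.B 0) : O.e 0 c = c := by
  obtain ⟨n, ⟨hn1, hn2, h0n⟩, -⟩ := O.hT2 0 (Nat.zero_le _) (dvd_zero _)
  have := O.heK1 n hn1 hn2 0 h0n 0 h0n c hc
  rwa [O.hπ0] at this

lemma bj_sub_theta (O : OvII A) {θ : Set (A × A)} (hcon : IsCon O.FA θ) (hβθ : O.β ⊆ θ)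
    {j : ℕ} (hj : j ≤ O.u * O.K) : O.bj j ⊆ θ := by
  rintro ⟨x, y⟩ h
  rw [O.bj_iff] at h
  obtain ⟨p, q, hpq, rfl, rfl⟩ := h
  by_cases hj0 : j = 0
  · subst hj0; rw [O.hπ0, O.hπ0]; exact hβθ hpq
  · have hop : O.q0j j ∈ O.FA :=
      Set.mem_union_right _ ⟨j, by omega, hj, rfl⟩
    have hθ := hcon.2 _ hop (p, q) (hβθ hpq)
    have h1 : O.q0j j p = O.π j p := by
      show O.π j (O.e 0 p) = O.π j p
      rw [O.e0_fix (O.bmem hpq).1]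
    have h2 : O.q0j j q = O.π j q := by
      show O.π j (O.e 0 q) = O.π j q
      rw [O.e0_fix (O.bmem hpq).2]
    rw [h1, h2] at hθ
    exact hθ

lemma tie_chain (O : OvII A) {θ : Set (A × A)} (hcon : IsCon O.FA θ) (hβθ : O.β ⊆ θ) :
    ∀ j ≤ O.u * O.K, (O.tie 0, O.tie j) ∈ θ := by
  intro j
  induction j with
  | zero => intro _; exact hcon.1.1 _
  | succ k ih =>
    intro hk1
    have hk : k ≤ O.u * O.K := by omega
    obtain ⟨s, hs⟩ := O.adjPoint (by omega : k < O.u * O.K)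
    have hts := O.tieLem hk hk1 (by omega) hs
    have h1 : (O.tie k, s) ∈ θ := O.bj_sub_theta hcon hβθ hk hts.1
    have h2 : (O.tie (k + 1), s) ∈ θ := O.bj_sub_theta hcon hβθ hk1 hts.2
    exact hcon.1.2.2 _ _ _ (ih hk) (hcon.1.2.2 _ _ _ h1 (hcon.1.2.1 _ _ h2))

lemma bstar_sub (O : OvII A) {θ : Set (A × A)} (hcon : IsCon O.FA θ) (hβθ : O.β ⊆ θ) :
    O.bstar ⊆ θ := by
  rintro ⟨x, y⟩ h
  rcases h with ⟨j, hj, h⟩ | ⟨⟨j1, hj1, hx⟩, ⟨j2, hj2, hy⟩⟩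
  · exact O.bj_sub_theta hcon hβθ hj h
  · have h1 : (O.tie j1, x) ∈ θ := O.bj_sub_theta hcon hβθ hj1 hx
    have h2 : (O.tie j2, y) ∈ θ := O.bj_sub_theta hcon hβθ hj2 hy
    have h3 := O.tie_chain hcon hβθ j1 hj1
    have h4 := O.tie_chain hcon hβθ j2 hj2
    exact hcon.1.2.2 _ _ _ (hcon.1.2.1 _ _ h1)
      (hcon.1.2.2 _ _ _ (hcon.1.2.1 _ _ h3) (hcon.1.2.2 _ _ _ h4 h2))

lemma beta_sub_bstar (O : OvII A) : O.β ⊆ O.bstar := by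
  rintro ⟨x, y⟩ h
  exact Set.mem_union_left _ ⟨0, Nat.zero_le _, O.bj0.2 h⟩

end OvII
end Overalg

open Overalg OvII in
/-- In an overalgebra `𝐀` of the second type, the relation
`β⋆ = ⋃_{j=0}^{uK} β^j ∪ (⋃_{j=0}^{uK} t_j/β^j)²` is a congruence of `𝐀`, and it is the
smallest congruence `θ` of `𝐀` with `θ ∩ (B×B) = β` (that is, `β⋆ = β*`). -/
theorem bstarII_isLeast {A : Type*} (O : OvII A) :
    IsCon O.FA O.bstar ∧
    IsLeast {θ : Set (A × A) | IsCon O.FA θ ∧ θ ∩ (O.B 0 ×ˢ O.B 0) = O.β} O.bstar ∧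
    O.bstar = ⋂₀ {θ : Set (A × A) | IsCon O.FA θ ∧ O.β ⊆ θ} := by
  refine ⟨O.bstar_isCon, ⟨⟨O.bstar_isCon, O.bstar_inter⟩, ?_⟩, ?_⟩
  · rintro θ ⟨hθcon, hθint⟩
    have hβθ : O.β ⊆ θ := hθint ▸ Set.inter_subset_left
    exact O.bstar_sub hθcon hβθ
  · refine subset_antisymm ?_ (Set.sInter_subset_of_mem ⟨O.bstar_isCon, O.beta_sub_bstar⟩)
    exact Set.subset_sInter fun θ hθ => O.bstar_sub hθ.1 hθ.2
end
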